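/- arXiv:2308.07190 — 12 statements merged into one kernel-verified Lean document; each statement's English description precedes it below -/
import Mathlib

section
/- There exists a constant c > 0 such that for every real number a and all integers k₁, k₂ with k₁·k₂·(k₁+k₂) ≠ 0 and max{|k₁|,|k₂|} > 4·|a|, one has |Φ_a^(2)(k₁,k₂)| ≥ c · min{|k₁|, |k₂|, |k₁+k₂|} · (max{|k₁|,|k₂|})⁴. -/
/-- `p a k = -k^5 + a·k^3`, the linear dispersion symbol (phase divided by `i`). -/
noncomputable def p (a : ℝ) (k : ℤ) : ℝ := -(k : ℝ) ^ 5 + a * (k : ℝ) ^ 3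

/-- The quadratic phase function `Φ_a^(2)`. -/
noncomputable def Phi2 (a : ℝ) (k₁ k₂ : ℤ) : ℝ :=
  p a (k₁ + k₂) - (p a k₁ + p a k₂)

set_option maxHeartbeats 1000000 in
/-- Lower bound for the quadratic phase on nonresonant frequencies above the threshold. -/
theorem phi2_lower_bound :
    ∃ C : ℝ, 0 < C ∧ ∀ (a : ℝ) (k₁ k₂ : ℤ),
      k₁ * k₂ * (k₁ + k₂) ≠ 0 →
      ((max |k₁| |k₂| : ℤ) : ℝ) > 4 * |a| →
      |Phi2 a k₁ k₂| ≥
        C * ((min (min |k₁| |k₂|) |k₁ + k₂| : ℤ) : ℝ) * ((max |k₁| |k₂| : ℤ) : ℝ) ^ 4 := by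
  refine ⟨1, one_pos, ?_⟩
  intro a k₁ k₂ hne hMa
  have h1 : k₁ ≠ 0 := by rintro rfl; simp at hne
  have h2 : k₂ ≠ 0 := by rintro rfl; simp at hne
  have h3 : k₁ + k₂ ≠ 0 := by rintro h; rw [h] at hne; simp at hne
  set x : ℝ := (k₁ : ℝ) with hx
  set y : ℝ := (k₂ : ℝ) with hy
  have hx1 : (1:ℝ) ≤ |x| := by
    rw [hx, ← Int.cast_abs]; exact_mod_cast Int.one_le_abs h1
  have hy1 : (1:ℝ) ≤ |y| := by
    rw [hy, ← Int.cast_abs]; exact_mod_cast Int.one_le_abs h2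
  have hxy1 : (1:ℝ) ≤ |x + y| := by
    rw [hx, hy, ← Int.cast_add, ← Int.cast_abs]; exact_mod_cast Int.one_le_abs h3
  set M : ℝ := max |x| |y| with hMdef
  set A : ℝ := min |x| |y| with hAdef
  set B : ℝ := |x + y| with hBdef
  set m : ℝ := min A B with hmdef
  have hcastM : ((max |k₁| |k₂| : ℤ) : ℝ) = M := by push_cast [hMdef, hx, hy]; ring_nf
  have hcastm : ((min (min |k₁| |k₂|) |k₁ + k₂| : ℤ) : ℝ) = m := by
    push_cast [hmdef, hAdef, hBdef, hx, hy]; ring_nf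
  rw [hcastM, hcastm]
  have hM1 : (1:ℝ) ≤ M := le_trans hx1 (le_max_left _ _)
  have hm1 : (1:ℝ) ≤ m := le_min (le_min hx1 hy1) hxy1
  have hmA : m ≤ A := min_le_left _ _
  have hmB : m ≤ B := min_le_right _ _
  have hMa' : 4 * |a| < M := by rwa [hcastM] at hMa
  -- A + B ≥ M
  have hABM : M ≤ A + B := by
    rcases le_total |x| |y| with h | h
    · have : |y| ≤ B + |x| := by
        calc |y| = |(x + y) + (-x)| := by ring_nf
        _ ≤ |x + y| + |(-x)| := abs_add_le _ _
        _ = B + |x| := by rw [abs_neg]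
      simp only [hMdef, hAdef, max_eq_right h, min_eq_left h]
      linarith
    · have : |x| ≤ B + |y| := by
        calc |x| = |(x + y) + (-y)| := by ring_nf
        _ ≤ |x + y| + |(-y)| := abs_add_le _ _
        _ = B + |y| := by rw [abs_neg]
      simp only [hMdef, hAdef, max_eq_left h, min_eq_right h]
      linarith
  -- |x|*|y| = M*A
  have hMA : |x| * |y| = M * A := by
    rcases le_total |x| |y| with h | h
    · simp only [hMdef, hAdef, max_eq_right h, min_eq_left h]; ring
    · simp only [hMdef, hAdef, max_eq_left h, min_eq_right h]
  set S : ℝ := x ^ 2 + x * y + y ^ 2 with hSdef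
  have h4S : 3 * M ^ 2 ≤ 4 * S := by
    rcases max_choice |x| |y| with h | h <;> rw [hMdef, h] <;>
      nlinarith [sq_nonneg (x + 2*y), sq_nonneg (2*x + y), sq_abs x, sq_abs y]
  have hP : 3 * M ^ 2 ≤ 5 * S - 3 * a := by
    nlinarith [le_abs_self a, mul_nonneg (by linarith : (0:ℝ) ≤ M - 1) (by linarith : (0:ℝ) ≤ M)]
  have hPpos : 0 < 5 * S - 3 * a := by nlinarith
  have key : Phi2 a k₁ k₂ = -(x * y * (x + y)) * (5 * S - 3 * a) := by
    simp only [Phi2, p, hSdef, hx, hy]; push_cast; ring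
  have habs : |Phi2 a k₁ k₂| = M * A * B * (5 * S - 3 * a) := by
    rw [key, abs_mul, abs_neg, abs_mul, abs_mul, abs_of_pos hPpos, hMA]
  rw [habs, one_mul]
  clear_value x y M A B m S
  -- 2*A*B ≥ m*M
  have h2AB : m * M ≤ 2 * (A * B) := by
    have hA1 : (1:ℝ) ≤ A := hAdef ▸ le_min hx1 hy1
    have h1' : m * B ≤ A * B := mul_le_mul_of_nonneg_right hmA (by linarith)
    have h2' : m * A ≤ A * B := by
      rw [mul_comm]; exact mul_le_mul_of_nonneg_left hmB (by linarith)
    have h3' : m * M ≤ m * A + m * B := by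
      have h := mul_le_mul_of_nonneg_left hABM (by linarith : (0:ℝ) ≤ m)
      linarith [mul_add m A B]
    linarith
  have hA1 : (1:ℝ) ≤ A := hAdef ▸ le_min hx1 hy1
  have step1 : M * A * B * (3 * M ^ 2) ≤ M * A * B * (5 * S - 3 * a) :=
    mul_le_mul_of_nonneg_left hP
      (mul_nonneg (mul_nonneg (by linarith) (by linarith)) (by linarith))
  have hM3 : (0:ℝ) ≤ M ^ 3 := by positivity
  have hstep2 : m * M * M ^ 3 ≤ 2 * (A * B) * M ^ 3 := mul_le_mul_of_nonneg_right h2AB hM3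
  have hmM4 : (0:ℝ) ≤ m * M ^ 4 := mul_nonneg (by linarith) (by positivity)
  linarith [step1, hstep2, hmM4]
end

section
/- There exists a constant C > 0 such that for all real numbers a, b and all integers k₁, k₂ with k₁·k₂·(k₁+k₂) ≠ 0 and max{|k₁|,|k₂|} > 4·max{|a|,|b|} (so that Φ_a^(2)(k₁,k₂) ≠ 0 and Φ_b^(2)(k₁,k₂) ≠ 0), one has |1/Φ_a^(2)(k₁,k₂) − 1/Φ_b^(2)(k₁,k₂)| ≤ C · (|a−b| / (max{|k₁|,|k₂|})²) · min{ 1/|Φ_a^(2)(k₁,k₂)|, 1/|Φ_b^(2)(k₁,k₂)| }. -/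
set_option maxHeartbeats 1000000 in
/-- Difference estimate for reciprocals of quadratic phases with different constants. -/
theorem phi2_reciprocal_difference :
    ∃ C : ℝ, 0 < C ∧ ∀ (a b : ℝ) (k₁ k₂ : ℤ),
      k₁ * k₂ * (k₁ + k₂) ≠ 0 →
      ((max |k₁| |k₂| : ℤ) : ℝ) > 4 * max |a| |b| →
      |1 / Phi2 a k₁ k₂ - 1 / Phi2 b k₁ k₂| ≤
        C * (|a - b| / ((max |k₁| |k₂| : ℤ) : ℝ) ^ 2) *
          min (1 / |Phi2 a k₁ k₂|) (1 / |Phi2 b k₁ k₂|) := by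
  refine ⟨1, one_pos, fun a b k₁ k₂ hk hm => ?_⟩
  set x : ℝ := (k₁ : ℝ) with hxdef
  set y : ℝ := (k₂ : ℝ) with hydef
  set m : ℝ := ((max |k₁| |k₂| : ℤ) : ℝ) with hmdef
  set t : ℝ := x * y * (x + y) with htdef
  set Q : ℝ := x ^ 2 + x * y + y ^ 2 with hQdef
  have ht : t ≠ 0 := by
    have h0 : ((k₁ * k₂ * (k₁ + k₂) : ℤ) : ℝ) ≠ 0 := by exact_mod_cast hk
    push_cast at h0
    exact h0
  have ht_pos : 0 < |t| := abs_pos.mpr ht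
  have hk1 : k₁ ≠ 0 := by
    intro h; apply hk; rw [h]; ring
  have hm1 : (1 : ℝ) ≤ m := by
    have h : (1 : ℤ) ≤ max |k₁| |k₂| :=
      le_trans (Int.one_le_abs hk1) (le_max_left _ _)
    rw [hmdef]; exact_mod_cast h
  have hx : |x| ≤ m := by
    have h : ((|k₁| : ℤ) : ℝ) ≤ m := by
      rw [hmdef]; exact_mod_cast le_max_left |k₁| |k₂|
    rwa [Int.cast_abs] at h
  have hy : |y| ≤ m := by
    have h : ((|k₂| : ℤ) : ℝ) ≤ m := by
      rw [hmdef]; exact_mod_cast le_max_right |k₁| |k₂|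
    rwa [Int.cast_abs] at h
  have hmx : m = |x| ∨ m = |y| := by
    rcases max_choice |k₁| |k₂| with h | h
    · left; rw [hmdef, h, Int.cast_abs]
    · right; rw [hmdef, h, Int.cast_abs]
  have hQ : 3 / 4 * m ^ 2 ≤ Q := by
    rcases hmx with h | h
    · rw [h, hQdef]; nlinarith [sq_nonneg (x / 2 + y), sq_abs x]
    · rw [h, hQdef]; nlinarith [sq_nonneg (x + y / 2), sq_abs y]
  have ha : |a| < m / 4 := by
    have h1 : |a| ≤ max |a| |b| := le_max_left _ _
    linarith
  have hb : |b| < m / 4 := by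
    have h1 : |b| ≤ max |a| |b| := le_max_right _ _
    linarith
  have hFa : 3 * m ^ 2 ≤ 5 * Q - 3 * a := by
    have := abs_le.mp (le_of_lt ha); nlinarith
  have hFb : 3 * m ^ 2 ≤ 5 * Q - 3 * b := by
    have := abs_le.mp (le_of_lt hb); nlinarith
  have hm0 : 0 < m := by linarith
  have hFa0 : 0 < 5 * Q - 3 * a := by nlinarith
  have hFb0 : 0 < 5 * Q - 3 * b := by nlinarith
  have hPa : Phi2 a k₁ k₂ = -t * (5 * Q - 3 * a) := by
    rw [Phi2, p, p, p, htdef, hQdef, hxdef, hydef]; push_cast; ring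
  have hPb : Phi2 b k₁ k₂ = -t * (5 * Q - 3 * b) := by
    rw [Phi2, p, p, p, htdef, hQdef, hxdef, hydef]; push_cast; ring
  clear_value x y m t Q
  clear hx hy hmx hxdef hydef htdef hQdef hmdef hQ ha hb hm hk hk1
  have hPaabs : |Phi2 a k₁ k₂| = |t| * (5 * Q - 3 * a) := by
    rw [hPa, abs_mul, abs_neg, abs_of_pos hFa0]
  have hPbabs : |Phi2 b k₁ k₂| = |t| * (5 * Q - 3 * b) := by
    rw [hPb, abs_mul, abs_neg, abs_of_pos hFb0]
  have hPane : Phi2 a k₁ k₂ ≠ 0 := by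
    rw [hPa]; exact mul_ne_zero (neg_ne_zero.mpr ht) (ne_of_gt hFa0)
  have hPbne : Phi2 b k₁ k₂ ≠ 0 := by
    rw [hPb]; exact mul_ne_zero (neg_ne_zero.mpr ht) (ne_of_gt hFb0)
  have key : 1 / Phi2 a k₁ k₂ - 1 / Phi2 b k₁ k₂ =
      (Phi2 b k₁ k₂ - Phi2 a k₁ k₂) / (Phi2 a k₁ k₂ * Phi2 b k₁ k₂) := by
    rw [div_sub_div _ _ hPane hPbne, one_mul, mul_one]
  have hdiff : Phi2 b k₁ k₂ - Phi2 a k₁ k₂ = 3 * t * (b - a) := by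
    rw [hPa, hPb]; ring
  have hLHS : |1 / Phi2 a k₁ k₂ - 1 / Phi2 b k₁ k₂| =
      3 * |t| * |a - b| / (|t| * (5 * Q - 3 * a) * (|t| * (5 * Q - 3 * b))) := by
    rw [key, hdiff, abs_div, abs_mul, abs_mul, abs_mul, hPaabs, hPbabs, abs_sub_comm b a]
    norm_num
  have hc : (0 : ℝ) ≤ |a - b| / m ^ 2 := by positivity
  rw [hLHS, hPaabs, hPbabs, one_mul, mul_min_of_nonneg _ _ hc, le_min_iff]
  have hm2 : (0 : ℝ) < m ^ 2 := by positivity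
  constructor
  · rw [mul_one_div, div_le_div_iff₀ (by positivity) (by positivity),
      div_mul_eq_mul_div, le_div_iff₀ hm2]
    have h1 : |a - b| * (3 * m ^ 2) ≤ |a - b| * (5 * Q - 3 * b) :=
      mul_le_mul_of_nonneg_left hFb (abs_nonneg _)
    nlinarith [mul_le_mul_of_nonneg_left h1
      (by positivity : (0 : ℝ) ≤ |t| * (|t| * (5 * Q - 3 * a)))]
  · rw [mul_one_div, div_le_div_iff₀ (by positivity) (by positivity),
      div_mul_eq_mul_div, le_div_iff₀ hm2]
    have h1 : |a - b| * (3 * m ^ 2) ≤ |a - b| * (5 * Q - 3 * a) :=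
      mul_le_mul_of_nonneg_left hFa (abs_nonneg _)
    nlinarith [mul_le_mul_of_nonneg_left h1
      (by positivity : (0 : ℝ) ≤ |t| * (|t| * (5 * Q - 3 * b)))]
end

section
/- There exists a constant c > 0 such that for every real number a and all integers k₁, k₂, k₃ with (k₁+k₂)·(k₂+k₃)·(k₁+k₃) ≠ 0 and max{|k₁|,|k₂|,|k₃|} > 16·|a|, one has |Φ_a^(3)(k₁,k₂,k₃)| ≥ c · min{ |k₁+k₂|·|k₁+k₃|, |k₁+k₂|·|k₂+k₃|, |k₁+k₃|·|k₂+k₃| } · (max{|k₁|,|k₂|,|k₃|})³. -/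
set_option maxHeartbeats 800000

/-- The cubic phase function `Φ_a^(3)`. -/
noncomputable def Phi3 (a : ℝ) (k₁ k₂ k₃ : ℤ) : ℝ :=
  p a (k₁ + k₂ + k₃) - (p a k₁ + p a k₂ + p a k₃)

/-- Lower bound for the cubic phase on nonresonant frequencies above the threshold. -/
theorem phi3_lower_bound :
    ∃ C : ℝ, 0 < C ∧ ∀ (a : ℝ) (k₁ k₂ k₃ : ℤ),
      (k₁ + k₂) * (k₂ + k₃) * (k₁ + k₃) ≠ 0 →
      ((max |k₁| (max |k₂| |k₃|) : ℤ) : ℝ) > 16 * |a| →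
      |Phi3 a k₁ k₂ k₃| ≥
        C * ((min (min (|k₁ + k₂| * |k₁ + k₃|) (|k₁ + k₂| * |k₂ + k₃|))
              (|k₁ + k₃| * |k₂ + k₃|) : ℤ) : ℝ) *
          ((max |k₁| (max |k₂| |k₃|) : ℤ) : ℝ) ^ 3 := by
  refine ⟨1, one_pos, ?_⟩
  intro a k₁ k₂ k₃ hne hMa
  set A : ℤ := |k₁ + k₂| with hA
  set B : ℤ := |k₂ + k₃| with hB
  set D : ℤ := |k₁ + k₃| with hD
  set M : ℤ := max |k₁| (max |k₂| |k₃|) with hMdef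
  set m : ℤ := min (min (A * D) (A * B)) (D * B) with hm
  have hA0 : 0 ≤ A := abs_nonneg _
  have hB0 : 0 ≤ B := abs_nonneg _
  have hD0 : 0 ≤ D := abs_nonneg _
  have hm0 : 0 ≤ m := le_min (le_min (mul_nonneg hA0 hD0) (mul_nonneg hA0 hB0))
    (mul_nonneg hD0 hB0)
  -- M ≥ 1
  have hM1 : (1 : ℤ) ≤ M := by
    rcases mul_ne_zero_iff.1 hne with ⟨h1, _⟩
    rcases mul_ne_zero_iff.1 h1 with ⟨h2, _⟩
    simp only [hMdef, Int.abs_eq_natAbs]; omega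
  -- 2M ≤ A + B + D
  have hsum : 2 * M ≤ A + B + D := by
    simp only [hMdef, hA, hB, hD, Int.abs_eq_natAbs]; omega
  -- key integer bound : m * (2*M) ≤ 3 * (A*B*D)
  have hkey : m * (2 * M) ≤ 3 * (A * B * D) := by
    have h1 : m * (2 * M) ≤ m * (A + B + D) := mul_le_mul_of_nonneg_left hsum hm0
    have hmA : m * A ≤ (D * B) * A := mul_le_mul_of_nonneg_right (min_le_right _ _) hA0
    have hmB : m * B ≤ (A * D) * B :=
      mul_le_mul_of_nonneg_right (le_trans (min_le_left _ _) (min_le_left _ _)) hB0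
    have hmD : m * D ≤ (A * B) * D :=
      mul_le_mul_of_nonneg_right (le_trans (min_le_left _ _) (min_le_right _ _)) hD0
    nlinarith
  -- M^2 ≤ k₁^2 + k₂^2 + k₃^2
  have hMsq : M ^ 2 ≤ k₁ ^ 2 + k₂ ^ 2 + k₃ ^ 2 := by
    rcases max_cases |k₁| (max |k₂| |k₃|) with ⟨h, _⟩ | ⟨h, _⟩
    · rw [hMdef, h]; nlinarith [sq_abs k₁, sq_nonneg k₂, sq_nonneg k₃]
    · rw [hMdef, h]
      rcases max_cases |k₂| |k₃| with ⟨h2, _⟩ | ⟨h2, _⟩ <;> rw [h2] <;>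
        nlinarith [sq_abs k₂, sq_abs k₃, sq_nonneg k₁, sq_nonneg k₂, sq_nonneg k₃]
  set Q : ℝ := (k₁ : ℝ) ^ 2 + (k₂ : ℝ) ^ 2 + (k₃ : ℝ) ^ 2 + (k₁ : ℝ) * (k₂ : ℝ)
      + (k₂ : ℝ) * (k₃ : ℝ) + (k₁ : ℝ) * (k₃ : ℝ) with hQ
  -- the factorization identity
  have hid : Phi3 a k₁ k₂ k₃ =
      (((k₁ : ℝ) + k₂) * ((k₂ : ℝ) + k₃) * ((k₁ : ℝ) + k₃)) * (3 * a - 5 * Q) := by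
    simp only [Phi3, p, hQ]
    push_cast
    ring
  -- |Phi3| = (A*B*D : ℝ) * |3a - 5Q|
  have habs : |Phi3 a k₁ k₂ k₃| = ((A : ℝ) * B * D) * |3 * a - 5 * Q| := by
    rw [hid, abs_mul]
    congr 1
    rw [abs_mul, abs_mul, hA, hB, hD]
    push_cast
    ring
  -- lower bound for |3a - 5Q|
  have hMR1 : (1 : ℝ) ≤ (M : ℝ) := by exact_mod_cast hM1
  have hMsqR : ((M : ℝ)) ^ 2 ≤ (k₁ : ℝ) ^ 2 + (k₂ : ℝ) ^ 2 + (k₃ : ℝ) ^ 2 := by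
    exact_mod_cast hMsq
  have hQge : (M : ℝ) ^ 2 / 2 ≤ Q := by
    rw [hQ]; nlinarith [sq_nonneg ((k₁ : ℝ) + k₂ + k₃)]
  have haM : 16 * |a| < (M : ℝ) := hMa
  have hbound : 2 * (M : ℝ) ^ 2 ≤ |3 * a - 5 * Q| := by
    have h1 : -(3 * a - 5 * Q) ≤ |3 * a - 5 * Q| := neg_le_abs _
    have h2 : a ≤ |a| := le_abs_self a
    nlinarith
  -- combine
  rw [habs, ge_iff_le, one_mul]
  have hkeyR : (m : ℝ) * (2 * (M : ℝ)) ≤ 3 * ((A : ℝ) * B * D) := by exact_mod_cast hkey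
  have hABD0 : (0 : ℝ) ≤ (A : ℝ) * B * D := by positivity
  have hm0R : (0 : ℝ) ≤ (m : ℝ) := by exact_mod_cast hm0
  nlinarith [mul_le_mul_of_nonneg_right hkeyR (sq_nonneg (M : ℝ)),
    mul_le_mul_of_nonneg_left hbound hABD0]
end

section
/- There exists a constant c > 0 such that for every real number a and all integers k₁, k₂, k₃ with (k₁+k₂)·(k₂+k₃)·(k₁+k₃) ≠ 0, max{|k₁|,|k₂|,|k₃|} > 16·|a|, and 16·min{|k₁|,|k₂|,|k₃|} ≤ max{|k₁|,|k₂|,|k₃|} (a quantitative form of the failure of |k₁| ∼ |k₂| ∼ |k₃|), one has |Φ_a^(3)(k₁,k₂,k₃)| ≥ c · min{ |k₁+k₂|, |k₁+k₃|, |k₂+k₃| } · (max{|k₁|,|k₂|,|k₃|})⁴. -/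
private lemma abs_tri3 (u v w t : ℝ) (h : t = u + v - w) : |t| ≤ |u| + |v| + |w| := by
  have h1 := abs_add_le (u + v) (-w)
  have h2 := abs_add_le u v
  rw [abs_neg] at h1
  have e : u + v + -w = t := by rw [h]; ring
  rw [e] at h1
  linarith

private lemma pair_facts (Kb Ks Kl M : ℝ) (hb : |Kb| = M) (hs : 16 * |Ks| ≤ M) :
    15/16 * M ≤ |Kb + Ks| ∧ 15/16 * M ≤ |Kb + Kl| + |Ks + Kl| := by
  have h1 : |Kb| ≤ |Kb + Ks| + |Ks| := by
    have h := abs_add_le (Kb + Ks) (-Ks)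
    rw [abs_neg] at h
    have e : Kb + Ks + -Ks = Kb := by ring
    rw [e] at h; exact h
  have h2 : |Kb| - |Ks| ≤ |Kb - Ks| := abs_sub_abs_le_abs_sub _ _
  have h3 : |Kb - Ks| ≤ |Kb + Kl| + |Ks + Kl| := by
    have h := abs_add_le (Kb + Kl) (-(Ks + Kl))
    rw [abs_neg] at h
    have e : Kb + Kl + -(Ks + Kl) = Kb - Ks := by ring
    rw [e] at h; exact h
  have h0 := abs_nonneg Ks
  constructor <;> linarith

private lemma prod_base (x y z M m : ℝ) (hm : 1 ≤ m) (hM : 0 ≤ M)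
    (hx : m ≤ x) (hy : m ≤ y)
    (hbig : 15/16 * M ≤ z) (hs : 15/16 * M ≤ x + y) :
    m * (1/4 * M ^ 2) ≤ x * y * z := by
  have hm0 : (0:ℝ) ≤ m := by linarith
  have hx0 : (0:ℝ) ≤ x := by linarith
  have hy0 : (0:ℝ) ≤ y := by linarith
  rcases le_total x y with h | h
  · have hy' : 15/32 * M ≤ y := by linarith
    have k1 : m * (15/32 * M) ≤ x * y := mul_le_mul hx hy' (by positivity) hx0
    have k2 : m * (15/32 * M) * (15/16 * M) ≤ x * y * z :=
      mul_le_mul k1 hbig (by positivity) (by positivity)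
    nlinarith [mul_nonneg hm0 (sq_nonneg M)]
  · have hx' : 15/32 * M ≤ x := by linarith
    have k1 : 15/32 * M * m ≤ x * y := mul_le_mul hx' hy hm0 hx0
    have k2 : 15/32 * M * m * (15/16 * M) ≤ x * y * z :=
      mul_le_mul k1 hbig (by positivity) (by positivity)
    nlinarith [mul_nonneg hm0 (sq_nonneg M)]

private lemma prod3' (x y z M m : ℝ) (hm : 1 ≤ m) (hM : 0 ≤ M)
    (hx : m ≤ x) (hy : m ≤ y) (hz : m ≤ z)
    (h : (15/16 * M ≤ x ∧ 15/16 * M ≤ y + z) ∨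
         (15/16 * M ≤ y ∧ 15/16 * M ≤ x + z) ∨
         (15/16 * M ≤ z ∧ 15/16 * M ≤ x + y)) :
    m * (1/4 * M ^ 2) ≤ x * y * z := by
  rcases h with ⟨hb, hs⟩ | ⟨hb, hs⟩ | ⟨hb, hs⟩
  · have := prod_base y z x M m hm hM hy hz hb hs
    nlinarith [this]
  · have := prod_base x z y M m hm hM hx hz hb hs
    nlinarith [this]
  · exact prod_base x y z M m hm hM hx hy hb hs

set_option maxHeartbeats 1000000 in
private lemma real_main (A K1 K2 K3 M m : ℝ)
    (hM1 : 1 ≤ M) (hm1 : 1 ≤ m)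
    (hmaxc : M = |K1| ∨ M = |K2| ∨ M = |K3|)
    (hsmall : 16 * |K1| ≤ M ∨ 16 * |K2| ≤ M ∨ 16 * |K3| ≤ M)
    (ha : 16 * |A| ≤ M)
    (hm12 : m ≤ |K1 + K2|) (hm13 : m ≤ |K1 + K3|) (hm23 : m ≤ |K2 + K3|) :
    1/2 * m * M ^ 4 ≤
      |K1 + K2| * |K2 + K3| * |K1 + K3| *
        |5 * (K1^2 + K2^2 + K3^2 + K1*K2 + K2*K3 + K1*K3) - 3 * A| := by
  have hM0 : (0:ℝ) ≤ M := by linarith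
  set x := |K1 + K2| with hxd
  set y := |K2 + K3| with hyd
  set z := |K1 + K3| with hzd
  have hx0 : (0:ℝ) ≤ x := abs_nonneg _
  have hy0 : (0:ℝ) ≤ y := abs_nonneg _
  have hz0 : (0:ℝ) ≤ z := abs_nonneg _
  -- 2M ≤ x + y + z
  have hS : 2 * M ≤ x + y + z := by
    rcases hmaxc with hc | hc | hc
    · have h1 := abs_tri3 (K1 + K2) (K1 + K3) (K2 + K3) (2 * K1) (by ring)
      have h2 : |2 * K1| = 2 * M := by rw [abs_mul, ← hc]; norm_num
      rw [h2] at h1; rw [hxd, hyd, hzd]; linarith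
    · have h1 := abs_tri3 (K1 + K2) (K2 + K3) (K1 + K3) (2 * K2) (by ring)
      have h2 : |2 * K2| = 2 * M := by rw [abs_mul, ← hc]; norm_num
      rw [h2] at h1; rw [hxd, hyd, hzd]; linarith
    · have h1 := abs_tri3 (K2 + K3) (K1 + K3) (K1 + K2) (2 * K3) (by ring)
      have h2 : |2 * K3| = 2 * M := by rw [abs_mul, ← hc]; norm_num
      rw [h2] at h1; rw [hxd, hyd, hzd]; linarith
  -- |5Q - 3A| ≥ 3 M^2
  have hsqx : x ^ 2 = (K1 + K2) ^ 2 := by rw [hxd, sq_abs]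
  have hsqy : y ^ 2 = (K2 + K3) ^ 2 := by rw [hyd, sq_abs]
  have hsqz : z ^ 2 = (K1 + K3) ^ 2 := by rw [hzd, sq_abs]
  have h2Q : 2 * (K1^2 + K2^2 + K3^2 + K1*K2 + K2*K3 + K1*K3) = x^2 + y^2 + z^2 := by
    rw [hsqx, hsqy, hsqz]; ring
  have hR : 3 * M ^ 2 ≤ |5 * (K1^2 + K2^2 + K3^2 + K1*K2 + K2*K3 + K1*K3) - 3 * A| := by
    have hle := le_abs_self (5 * (K1^2 + K2^2 + K3^2 + K1*K2 + K2*K3 + K1*K3) - 3 * A)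
    have hA := le_abs_self A
    have hSS : 4 * M ^ 2 ≤ (x + y + z) ^ 2 := by
      nlinarith [sq_nonneg (x + y + z - 2 * M), hS, hM0]
    have h3 : (x + y + z) ^ 2 ≤ 3 * (x^2 + y^2 + z^2) := by
      nlinarith [sq_nonneg (x - y), sq_nonneg (y - z), sq_nonneg (x - z)]
    have hMM : M ≤ M ^ 2 := by nlinarith [sq_nonneg (M - 1)]
    linarith
  -- product bound
  have hprod : m * (1/4 * M ^ 2) ≤ x * y * z := by
    apply prod3' x y z M m hm1 hM0 hm12 hm23 hm13
    rcases hmaxc with hc | hc | hc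
    · rcases hsmall with hs | hs | hs
      · exfalso; rw [hc] at hM1; linarith
      · obtain ⟨hbig, hsum⟩ := pair_facts K1 K2 K3 M hc.symm hs
        exact Or.inl ⟨by rw [hxd]; exact hbig, by rw [hyd, hzd]; linarith⟩
      · obtain ⟨hbig, hsum⟩ := pair_facts K1 K3 K2 M hc.symm hs
        rw [add_comm K3 K2] at hsum
        exact Or.inr (Or.inr ⟨by rw [hzd]; exact hbig, by rw [hxd, hyd]; linarith⟩)
    · rcases hsmall with hs | hs | hs
      · obtain ⟨hbig, hsum⟩ := pair_facts K2 K1 K3 M hc.symm hs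
        rw [add_comm K2 K1] at hbig
        exact Or.inl ⟨by rw [hxd]; exact hbig, by rw [hyd, hzd]; linarith⟩
      · exfalso; rw [hc] at hM1; linarith
      · obtain ⟨hbig, hsum⟩ := pair_facts K2 K3 K1 M hc.symm hs
        rw [add_comm K2 K1, add_comm K3 K1] at hsum
        exact Or.inr (Or.inl ⟨by rw [hyd]; exact hbig, by rw [hxd, hzd]; linarith⟩)
    · rcases hsmall with hs | hs | hs
      · obtain ⟨hbig, hsum⟩ := pair_facts K3 K1 K2 M hc.symm hs
        rw [add_comm K3 K1] at hbig
        rw [add_comm K3 K2] at hsum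
        exact Or.inr (Or.inr ⟨by rw [hzd]; exact hbig, by rw [hxd, hyd]; linarith⟩)
      · obtain ⟨hbig, hsum⟩ := pair_facts K3 K2 K1 M hc.symm hs
        rw [add_comm K3 K2] at hbig
        rw [add_comm K3 K1, add_comm K2 K1] at hsum
        exact Or.inr (Or.inl ⟨by rw [hyd]; exact hbig, by rw [hxd, hzd]; linarith⟩)
      · exfalso; rw [hc] at hM1; linarith
  -- combine
  have hxyz0 : (0:ℝ) ≤ x * y * z := by positivity
  have key : m * (1/4 * M ^ 2) * (3 * M ^ 2) ≤ x * y * z *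
      |5 * (K1^2 + K2^2 + K3^2 + K1*K2 + K2*K3 + K1*K3) - 3 * A| :=
    mul_le_mul hprod hR (by positivity) hxyz0
  have hmM4 : (0:ℝ) ≤ m * M ^ 4 := by positivity
  nlinarith [key, hmM4]

/-- Improved lower bound for the cubic phase when the three frequencies are not all
comparable. -/
theorem phi3_lower_bound_noncomparable :
    ∃ C : ℝ, 0 < C ∧ ∀ (a : ℝ) (k₁ k₂ k₃ : ℤ),
      (k₁ + k₂) * (k₂ + k₃) * (k₁ + k₃) ≠ 0 →
      ((max |k₁| (max |k₂| |k₃|) : ℤ) : ℝ) > 16 * |a| →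
      16 * min |k₁| (min |k₂| |k₃|) ≤ max |k₁| (max |k₂| |k₃|) →
      |Phi3 a k₁ k₂ k₃| ≥
        C * ((min (min |k₁ + k₂| |k₁ + k₃|) |k₂ + k₃| : ℤ) : ℝ) *
          ((max |k₁| (max |k₂| |k₃|) : ℤ) : ℝ) ^ 4 := by
  refine ⟨1/2, by norm_num, ?_⟩
  intro a k₁ k₂ k₃ hP hMa hmm
  have h13 : k₁ + k₃ ≠ 0 := right_ne_zero_of_mul hP
  have h12 : k₁ + k₂ ≠ 0 := left_ne_zero_of_mul (left_ne_zero_of_mul hP)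
  have h23 : k₂ + k₃ ≠ 0 := right_ne_zero_of_mul (left_ne_zero_of_mul hP)
  -- factorization of the phase
  have hident : Phi3 a k₁ k₂ k₃ =
      ((k₁:ℝ) + k₂) * ((k₂:ℝ) + k₃) * ((k₁:ℝ) + k₃) *
        (-(5 * ((k₁:ℝ)^2 + (k₂:ℝ)^2 + (k₃:ℝ)^2 + (k₁:ℝ)*(k₂:ℝ) + (k₂:ℝ)*(k₃:ℝ)
            + (k₁:ℝ)*(k₃:ℝ)) - 3 * a)) := by
    unfold Phi3 p
    push_cast
    ring
  have habs : |Phi3 a k₁ k₂ k₃| =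
      |(k₁:ℝ) + k₂| * |(k₂:ℝ) + k₃| * |(k₁:ℝ) + k₃| *
        |5 * ((k₁:ℝ)^2 + (k₂:ℝ)^2 + (k₃:ℝ)^2 + (k₁:ℝ)*(k₂:ℝ) + (k₂:ℝ)*(k₃:ℝ)
            + (k₁:ℝ)*(k₃:ℝ)) - 3 * a| := by
    rw [hident, abs_mul, abs_mul, abs_mul, abs_neg]
  rw [ge_iff_le, habs]
  -- integer facts
  have hMz0 : (0:ℤ) < max |k₁| (max |k₂| |k₃|) := by
    have : (0:ℝ) ≤ 16 * |a| := by positivity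
    exact_mod_cast lt_of_le_of_lt this hMa
  have hMz1 : (1:ℤ) ≤ max |k₁| (max |k₂| |k₃|) := hMz0
  have hmz1 : (1:ℤ) ≤ min (min |k₁ + k₂| |k₁ + k₃|) |k₂ + k₃| :=
    le_min (le_min (Int.one_le_abs h12) (Int.one_le_abs h13)) (Int.one_le_abs h23)
  push_cast
  have hM1 : (1:ℝ) ≤ max |(k₁:ℝ)| (max |(k₂:ℝ)| |(k₃:ℝ)|) := by exact_mod_cast hMz1
  have hm1 : (1:ℝ) ≤ min (min |(k₁:ℝ) + k₂| |(k₁:ℝ) + k₃|) |(k₂:ℝ) + k₃| := by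
    exact_mod_cast hmz1
  have hmaxc : max |(k₁:ℝ)| (max |(k₂:ℝ)| |(k₃:ℝ)|) = |(k₁:ℝ)|
      ∨ max |(k₁:ℝ)| (max |(k₂:ℝ)| |(k₃:ℝ)|) = |(k₂:ℝ)|
      ∨ max |(k₁:ℝ)| (max |(k₂:ℝ)| |(k₃:ℝ)|) = |(k₃:ℝ)| := by
    rcases max_choice |(k₁:ℝ)| (max |(k₂:ℝ)| |(k₃:ℝ)|) with h | h
    · exact Or.inl h
    · rcases max_choice |(k₂:ℝ)| |(k₃:ℝ)| with h' | h'
      · exact Or.inr (Or.inl (by rw [h, h']))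
      · exact Or.inr (Or.inr (by rw [h, h']))
  have hmmR : 16 * min |(k₁:ℝ)| (min |(k₂:ℝ)| |(k₃:ℝ)|) ≤
      max |(k₁:ℝ)| (max |(k₂:ℝ)| |(k₃:ℝ)|) := by exact_mod_cast hmm
  have hsmall : 16 * |(k₁:ℝ)| ≤ max |(k₁:ℝ)| (max |(k₂:ℝ)| |(k₃:ℝ)|)
      ∨ 16 * |(k₂:ℝ)| ≤ max |(k₁:ℝ)| (max |(k₂:ℝ)| |(k₃:ℝ)|)
      ∨ 16 * |(k₃:ℝ)| ≤ max |(k₁:ℝ)| (max |(k₂:ℝ)| |(k₃:ℝ)|) := by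
    rcases min_choice |(k₁:ℝ)| (min |(k₂:ℝ)| |(k₃:ℝ)|) with h | h
    · exact Or.inl (by rw [h] at hmmR; exact hmmR)
    · rcases min_choice |(k₂:ℝ)| |(k₃:ℝ)| with h' | h'
      · exact Or.inr (Or.inl (by rw [h, h'] at hmmR; exact hmmR))
      · exact Or.inr (Or.inr (by rw [h, h'] at hmmR; exact hmmR))
  have haR : 16 * |a| ≤ max |(k₁:ℝ)| (max |(k₂:ℝ)| |(k₃:ℝ)|) := by
    push_cast at hMa; linarith
  have hm12 : min (min |(k₁:ℝ) + k₂| |(k₁:ℝ) + k₃|) |(k₂:ℝ) + k₃| ≤ |(k₁:ℝ) + k₂| :=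
    le_trans (min_le_left _ _) (min_le_left _ _)
  have hm13 : min (min |(k₁:ℝ) + k₂| |(k₁:ℝ) + k₃|) |(k₂:ℝ) + k₃| ≤ |(k₁:ℝ) + k₃| :=
    le_trans (min_le_left _ _) (min_le_right _ _)
  have hm23 : min (min |(k₁:ℝ) + k₂| |(k₁:ℝ) + k₃|) |(k₂:ℝ) + k₃| ≤ |(k₂:ℝ) + k₃| :=
    min_le_right _ _
  exact real_main a (k₁:ℝ) (k₂:ℝ) (k₃:ℝ) _ _ hM1 hm1 hmaxc hsmall haR hm12 hm13 hm23
end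

section
/- There exists a constant C > 0 such that for all real numbers a, b and all integers k₁, k₂, k₃ with (k₁+k₂)·(k₂+k₃)·(k₁+k₃) ≠ 0 and max{|k₁|,|k₂|,|k₃|} > 16·max{|a|,|b|} (so that Φ_a^(3)(k₁,k₂,k₃) ≠ 0 and Φ_b^(3)(k₁,k₂,k₃) ≠ 0), one has |1/Φ_a^(3)(k₁,k₂,k₃) − 1/Φ_b^(3)(k₁,k₂,k₃)| ≤ C · (|a−b| / (max{|k₁|,|k₂|,|k₃|})²) · min{ 1/|Φ_a^(3)(k₁,k₂,k₃)|, 1/|Φ_b^(3)(k₁,k₂,k₃)| }. -/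
set_option maxHeartbeats 1600000 in
/-- Difference estimate for reciprocals of cubic phases with different constants. -/
theorem phi3_reciprocal_difference :
    ∃ C : ℝ, 0 < C ∧ ∀ (a b : ℝ) (k₁ k₂ k₃ : ℤ),
      (k₁ + k₂) * (k₂ + k₃) * (k₁ + k₃) ≠ 0 →
      ((max |k₁| (max |k₂| |k₃|) : ℤ) : ℝ) > 16 * max |a| |b| →
      |1 / Phi3 a k₁ k₂ k₃ - 1 / Phi3 b k₁ k₂ k₃| ≤
        C * (|a - b| / ((max |k₁| (max |k₂| |k₃|) : ℤ) : ℝ) ^ 2) *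
          min (1 / |Phi3 a k₁ k₂ k₃|) (1 / |Phi3 b k₁ k₂ k₃|) := by
  refine ⟨2, two_pos, fun a b k₁ k₂ k₃ hP hM => ?_⟩
  set m : ℝ := ((max |k₁| (max |k₂| |k₃|) : ℤ) : ℝ) with hm
  set P : ℝ := (((k₁ + k₂) * (k₂ + k₃) * (k₁ + k₃) : ℤ) : ℝ) with hPd
  set Q : ℝ := ((k₁:ℝ)^2 + (k₂:ℝ)^2 + (k₃:ℝ)^2 + ((k₁:ℝ)+(k₂:ℝ)+(k₃:ℝ))^2)/2 with hQd
  have hΦa : Phi3 a k₁ k₂ k₃ = P * (3*a - 5*Q) := by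
    simp only [Phi3, p, hPd, hQd]; push_cast; ring
  have hΦb : Phi3 b k₁ k₂ k₃ = P * (3*b - 5*Q) := by
    simp only [Phi3, p, hPd, hQd]; push_cast; ring
  clear_value m P Q
  have hm0 : 0 < m := lt_of_le_of_lt (by positivity) hM
  have hMZ : (0:ℤ) < max |k₁| (max |k₂| |k₃|) := by
    have h := hm0; rw [hm] at h; exact_mod_cast h
  have hm1 : (1:ℝ) ≤ m := by rw [hm]; exact_mod_cast hMZ
  have hP1 : (1:ℝ) ≤ |P| := by
    rw [hPd, ← Int.cast_abs]
    exact_mod_cast Int.one_le_abs hP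
  have hsq : (max |k₁| (max |k₂| |k₃|))^2 ≤ k₁^2 + k₂^2 + k₃^2 := by
    rcases max_cases |k₁| (max |k₂| |k₃|) with ⟨h, _⟩ | ⟨h, _⟩
    · rw [h, sq_abs]; nlinarith [sq_nonneg k₂, sq_nonneg k₃]
    · rcases max_cases |k₂| |k₃| with ⟨h2, _⟩ | ⟨h2, _⟩ <;> rw [h, h2, sq_abs] <;>
        nlinarith [sq_nonneg k₁, sq_nonneg k₂, sq_nonneg k₃]
  have hkey : m^2 ≤ (k₁:ℝ)^2 + (k₂:ℝ)^2 + (k₃:ℝ)^2 := by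
    rw [hm]; exact_mod_cast hsq
  have hQm : m^2/2 ≤ Q := by
    rw [hQd]; nlinarith [sq_nonneg ((k₁:ℝ)+(k₂:ℝ)+(k₃:ℝ))]
  have ha : |a| < m/16 := by
    have := le_max_left |a| |b|; linarith
  have hb : |b| < m/16 := by
    have := le_max_right |a| |b|; linarith
  have hda : 2*m^2 ≤ |3*a - 5*Q| := by
    have h2 := abs_lt.mp ha
    have h1 : 2*m^2 ≤ 5*Q - 3*a := by nlinarith [hQm, hm1, h2.1, h2.2]
    calc 2*m^2 ≤ 5*Q - 3*a := h1
      _ ≤ |5*Q - 3*a| := le_abs_self _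
      _ = |3*a - 5*Q| := abs_sub_comm _ _
  have hdb : 2*m^2 ≤ |3*b - 5*Q| := by
    have h2 := abs_lt.mp hb
    have h1 : 2*m^2 ≤ 5*Q - 3*b := by nlinarith [hQm, hm1, h2.1, h2.2]
    calc 2*m^2 ≤ 5*Q - 3*b := h1
      _ ≤ |5*Q - 3*b| := le_abs_self _
      _ = |3*b - 5*Q| := abs_sub_comm _ _
  have hAeq : |Phi3 a k₁ k₂ k₃| = |P| * |3*a - 5*Q| := by rw [hΦa, abs_mul]
  have hBeq : |Phi3 b k₁ k₂ k₃| = |P| * |3*b - 5*Q| := by rw [hΦb, abs_mul]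
  have hA : 2 * |P| * m ^ 2 ≤ |Phi3 a k₁ k₂ k₃| := by
    rw [hAeq]
    calc 2 * |P| * m ^ 2 = |P| * (2 * m ^ 2) := by ring
      _ ≤ |P| * |3*a - 5*Q| := mul_le_mul_of_nonneg_left hda (abs_nonneg P)
  have hB : 2 * |P| * m ^ 2 ≤ |Phi3 b k₁ k₂ k₃| := by
    rw [hBeq]
    calc 2 * |P| * m ^ 2 = |P| * (2 * m ^ 2) := by ring
      _ ≤ |P| * |3*b - 5*Q| := mul_le_mul_of_nonneg_left hdb (abs_nonneg P)
  have hpos2 : (0:ℝ) < 2 * |P| * m ^ 2 := by nlinarith [hP1, hm1]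
  have hApos : 0 < |Phi3 a k₁ k₂ k₃| := lt_of_lt_of_le hpos2 hA
  have hBpos : 0 < |Phi3 b k₁ k₂ k₃| := lt_of_lt_of_le hpos2 hB
  have hAne : Phi3 a k₁ k₂ k₃ ≠ 0 := abs_pos.mp hApos
  have hBne : Phi3 b k₁ k₂ k₃ ≠ 0 := abs_pos.mp hBpos
  have hsub : Phi3 b k₁ k₂ k₃ - Phi3 a k₁ k₂ k₃ = P * (3*(b-a)) := by
    rw [hΦa, hΦb]; ring
  have habs : |Phi3 b k₁ k₂ k₃ - Phi3 a k₁ k₂ k₃| = 3 * |P| * |a - b| := by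
    rw [hsub, abs_mul, abs_mul, abs_sub_comm b a,
      abs_of_nonneg (by norm_num : (0:ℝ) ≤ 3)]
    ring
  have hLHS : |1 / Phi3 a k₁ k₂ k₃ - 1 / Phi3 b k₁ k₂ k₃|
      = (3 * |P| * |a - b|) / (|Phi3 a k₁ k₂ k₃| * |Phi3 b k₁ k₂ k₃|) := by
    rw [div_sub_div _ _ hAne hBne, one_mul, mul_one, abs_div, abs_mul, habs]
  rw [hLHS]
  have hD : 0 ≤ |a - b| := abs_nonneg _
  have G1 : (3 * |P| * |a - b|) / (|Phi3 a k₁ k₂ k₃| * |Phi3 b k₁ k₂ k₃|) ≤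
      2 * (|a - b| / m^2) * (1 / |Phi3 a k₁ k₂ k₃|) := by
    have e1 : (3 * |P| * |a - b|) / (|Phi3 a k₁ k₂ k₃| * |Phi3 b k₁ k₂ k₃|)
        = (3 * |P| / |Phi3 b k₁ k₂ k₃|) * (|a - b| / |Phi3 a k₁ k₂ k₃|) := by
      ring
    have e2 : 2 * (|a - b| / m^2) * (1 / |Phi3 a k₁ k₂ k₃|)
        = (2 / m^2) * (|a - b| / |Phi3 a k₁ k₂ k₃|) := by
      ring
    rw [e1, e2]
    apply mul_le_mul_of_nonneg_right _ (by positivity)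
    rw [div_le_div_iff₀ hBpos (by positivity)]
    nlinarith [hB, hP1, sq_nonneg m, hm1]
  have G2 : (3 * |P| * |a - b|) / (|Phi3 a k₁ k₂ k₃| * |Phi3 b k₁ k₂ k₃|) ≤
      2 * (|a - b| / m^2) * (1 / |Phi3 b k₁ k₂ k₃|) := by
    have e1 : (3 * |P| * |a - b|) / (|Phi3 a k₁ k₂ k₃| * |Phi3 b k₁ k₂ k₃|)
        = (3 * |P| / |Phi3 a k₁ k₂ k₃|) * (|a - b| / |Phi3 b k₁ k₂ k₃|) := by
      ring
    have e2 : 2 * (|a - b| / m^2) * (1 / |Phi3 b k₁ k₂ k₃|)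
        = (2 / m^2) * (|a - b| / |Phi3 b k₁ k₂ k₃|) := by
      ring
    rw [e1, e2]
    apply mul_le_mul_of_nonneg_right _ (by positivity)
    rw [div_le_div_iff₀ hApos (by positivity)]
    nlinarith [hA, hP1, sq_nonneg m, hm1]
  have : 2 * (|a - b| / m^2) * min (1 / |Phi3 a k₁ k₂ k₃|) (1 / |Phi3 b k₁ k₂ k₃|)
      = min (2 * (|a - b| / m^2) * (1 / |Phi3 a k₁ k₂ k₃|))
          (2 * (|a - b| / m^2) * (1 / |Phi3 b k₁ k₂ k₃|)) := by
    exact mul_min_of_nonneg _ _ (by positivity)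
  rw [this]
  exact le_min G1 G2
end

section
/- For every real number a, every ε > 0 and every M > 0 there exist integers k₁, k₂, k₃, k₄ such that k₁+k₂+k₃ ≠ 0, |k₄| > M · max{1, |k₁|, |k₂|, |k₃|}, and |Φ_a^(4)(k₁,k₂,k₃,k₄)| ≤ ε · |k₄|⁴. (Consequently, the infimum of |Φ_a^(4)|·|k₄|^{-4} over the region { |k₄| ≫ max{|k₁|,|k₂|,|k₃|}, |k₄| ≳ |a|, k₁+k₂+k₃ ≠ 0 } is 0: no gain of |k₄|⁴ from the quartic phase is possible under the condition k₁+k₂+k₃ ≠ 0 alone.) -/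
/-- The quartic phase function `Φ_a^(4)`. -/
noncomputable def Phi4 (a : ℝ) (k₁ k₂ k₃ k₄ : ℤ) : ℝ :=
  p a (k₁ + k₂ + k₃ + k₄) - (p a k₁ + p a k₂ + p a k₃ + p a k₄)

/-- The quartic phase cannot gain `|k₄|⁴` under the condition `k₁+k₂+k₃ ≠ 0` alone:
for every `a`, `ε > 0` and `M > 0` there are frequencies with `k₁+k₂+k₃ ≠ 0`,
`|k₄|` much larger than `1, |k₁|, |k₂|, |k₃|`, and `|Φ_a^(4)| ≤ ε·|k₄|⁴`. -/
theorem phi4_no_gain (a : ℝ) (ε M : ℝ) (hε : 0 < ε) (hM : 0 < M) :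
    ∃ k₁ k₂ k₃ k₄ : ℤ,
      k₁ + k₂ + k₃ ≠ 0 ∧
      ((|k₄| : ℤ) : ℝ) > M * max 1 (max ((|k₁| : ℤ) : ℝ) (max ((|k₂| : ℤ) : ℝ) ((|k₃| : ℤ) : ℝ))) ∧
      |Phi4 a k₁ k₂ k₃ k₄| ≤ ε * ((|k₄| : ℤ) : ℝ) ^ 4 := by
  -- choose an integer m > M, m ≥ 2
  set m : ℤ := ⌈M⌉ + 1 with hm_def
  have hm1 : (1 : ℤ) ≤ ⌈M⌉ := by exact_mod_cast Int.one_le_ceil_iff.mpr hM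
  have hm2 : (2 : ℤ) ≤ m := by omega
  have hmM : M < (m : ℝ) := by
    have h := Int.le_ceil M
    rw [hm_def]
    push_cast
    linarith
  have hmpos : (0 : ℝ) < (m : ℝ) := by
    have : (0:ℤ) < m := by omega
    exact_mod_cast this
  set mm : ℝ := (m : ℝ) with hmm
  -- coefficients of the cubic polynomial F(t) = Phi4
  set c₃ : ℝ := -10 * mm ^ 3 - 10 * mm ^ 8 with hc3
  set c₂ : ℝ := -10 * mm ^ 2 + 3 * a * mm ^ 2 + 10 * mm ^ 12 - 3 * a * mm ^ 4 with hc2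
  set c₁ : ℝ := -5 * mm + 3 * a * mm - 5 * mm ^ 16 + 3 * a * mm ^ 8 with hc1
  set c₀ : ℝ := -5 * mm ^ 4 + 10 * mm ^ 8 - 10 * mm ^ 12 + 5 * mm ^ 16
      + 3 * a * mm ^ 4 - 3 * a * mm ^ 8 with hc0
  set C : ℝ := |c₃| + |c₂| + |c₁| + |c₀| with hC
  have hCnn : 0 ≤ C := by positivity
  -- choose t large
  have hεm : 0 < ε * mm ^ 4 := by positivity
  set t : ℤ := max (m ^ 4 + 1) (⌈C / (ε * mm ^ 4)⌉ + 1) with ht_def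
  have htm : m ^ 4 + 1 ≤ t := le_max_left _ _
  have htm' : (0:ℤ) < m ^ 4 := by positivity
  have ht1 : (1 : ℤ) ≤ t := by omega
  have htpos : (0 : ℝ) < (t : ℝ) := by exact_mod_cast (by omega : (0:ℤ) < t)
  have ht1R : (1 : ℝ) ≤ (t : ℝ) := by exact_mod_cast ht1
  have htC : C / (ε * mm ^ 4) ≤ (t : ℝ) := by
    have h1 : ⌈C / (ε * mm ^ 4)⌉ + 1 ≤ t := le_max_right _ _
    have h2 := Int.le_ceil (C / (ε * mm ^ 4))
    have : ((⌈C / (ε * mm ^ 4)⌉ + 1 : ℤ) : ℝ) ≤ (t : ℝ) := by exact_mod_cast h1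
    push_cast at this
    linarith
  refine ⟨t, -t + m ^ 4, 1 - m ^ 4, m * t, ?_, ?_, ?_⟩
  · intro h; omega
  · -- size condition
    have habs4 : |m * t| = m * t := abs_of_pos (by positivity)
    have habs1 : |t| = t := abs_of_pos (by omega)
    have habs2 : |-t + m ^ 4| = t - m ^ 4 := by
      rw [abs_of_nonpos (by omega)]; ring
    have habs3 : |1 - m ^ 4| = m ^ 4 - 1 := by
      rw [abs_of_nonpos (by nlinarith)]; ring
    rw [habs4, habs1, habs2, habs3]
    have hmax : max (1:ℝ) (max ((t:ℤ):ℝ) (max (((t - m^4 :ℤ)):ℝ) (((m^4 - 1:ℤ)):ℝ))) = (t:ℝ) := by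
      have e1 : ((t - m^4 : ℤ) : ℝ) ≤ (t : ℝ) := by exact_mod_cast (by omega : t - m^4 ≤ t)
      have e2 : ((m^4 - 1 : ℤ) : ℝ) ≤ (t : ℝ) := by exact_mod_cast (by omega : m^4 - 1 ≤ t)
      rw [max_eq_right, max_eq_left]
      · exact max_le e1 e2
      · exact le_trans ht1R (le_max_left _ _)
    rw [hmax]
    have : M * (t:ℝ) < mm * (t:ℝ) := by
      exact mul_lt_mul_of_pos_right hmM htpos
    calc M * (t:ℝ) < mm * (t:ℝ) := this
      _ = ((m * t : ℤ) : ℝ) := by push_cast; rfl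
  · -- the phase bound
    have habs4 : |m * t| = m * t := abs_of_pos (by positivity)
    rw [habs4]
    have key : Phi4 a t (-t + m ^ 4) (1 - m ^ 4) (m * t)
        = c₃ * (t:ℝ)^3 + c₂ * (t:ℝ)^2 + c₁ * (t:ℝ) + c₀ := by
      simp only [Phi4, p, hc3, hc2, hc1, hc0, hmm]
      push_cast
      ring
    rw [key]
    have T := (t : ℝ)
    have hb : |c₃ * (t:ℝ)^3 + c₂ * (t:ℝ)^2 + c₁ * (t:ℝ) + c₀| ≤ C * (t:ℝ)^3 := by
      have h3 : |c₃ * (t:ℝ)^3| = |c₃| * (t:ℝ)^3 := by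
        rw [abs_mul, abs_of_nonneg (by positivity : (0:ℝ) ≤ (t:ℝ)^3)]
      have h2' : |c₂ * (t:ℝ)^2| ≤ |c₂| * (t:ℝ)^3 := by
        rw [abs_mul, abs_of_nonneg (by positivity : (0:ℝ) ≤ (t:ℝ)^2)]
        have : (t:ℝ)^2 ≤ (t:ℝ)^3 := by nlinarith
        exact mul_le_mul_of_nonneg_left this (abs_nonneg _)
      have h1' : |c₁ * (t:ℝ)| ≤ |c₁| * (t:ℝ)^3 := by
        rw [abs_mul, abs_of_nonneg htpos.le]
        have : (t:ℝ) ≤ (t:ℝ)^3 := by nlinarith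
        exact mul_le_mul_of_nonneg_left this (abs_nonneg _)
      have h0' : |c₀| ≤ |c₀| * (t:ℝ)^3 := by
        have h13 : (1:ℝ) ≤ (t:ℝ)^3 := one_le_pow₀ ht1R
        exact le_mul_of_one_le_right (abs_nonneg _) h13
      calc |c₃ * (t:ℝ)^3 + c₂ * (t:ℝ)^2 + c₁ * (t:ℝ) + c₀|
          ≤ |c₃ * (t:ℝ)^3| + |c₂ * (t:ℝ)^2| + |c₁ * (t:ℝ)| + |c₀| := by
            have a1 := abs_add_le (c₃ * (t:ℝ)^3 + c₂ * (t:ℝ)^2 + c₁ * (t:ℝ)) c₀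
            have a2 := abs_add_le (c₃ * (t:ℝ)^3 + c₂ * (t:ℝ)^2) (c₁ * (t:ℝ))
            have a3 := abs_add_le (c₃ * (t:ℝ)^3) (c₂ * (t:ℝ)^2)
            linarith
        _ ≤ |c₃| * (t:ℝ)^3 + |c₂| * (t:ℝ)^3 + |c₁| * (t:ℝ)^3 + |c₀| * (t:ℝ)^3 := by
            rw [h3]; linarith
        _ = C * (t:ℝ)^3 := by rw [hC]; ring
    have hfinal : C * (t:ℝ)^3 ≤ ε * ((m * t : ℤ) : ℝ)^4 := by
      have h1 : C ≤ ε * mm ^ 4 * (t:ℝ) := by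
        rw [div_le_iff₀ hεm] at htC; linarith
      have : ((m * t : ℤ) : ℝ)^4 = mm^4 * (t:ℝ)^4 := by push_cast; ring
      rw [this]
      have h2 : C * (t:ℝ)^3 ≤ (ε * mm ^ 4 * (t:ℝ)) * (t:ℝ)^3 :=
        mul_le_mul_of_nonneg_right h1 (by positivity)
      calc C * (t:ℝ)^3 ≤ (ε * mm ^ 4 * (t:ℝ)) * (t:ℝ)^3 := h2
        _ = ε * (mm^4 * (t:ℝ)^4) := by ring
    exact le_trans hb hfinal
end

section
/- Let a be a real number and k₁, k₂, k₃, k₄ integers with |k₄| > 16·max{1, |a|} and k₁+k₂+k₃ ≠ 0. Assume that at least one of the following holds: (i) |k₄| > 4·|k₃| and |k₃| > 16·|k₂| and |k₂| ≥ |k₁|; (ii) |k₄|^{4/5} > 64·|k₃| and |k₃| ≥ |k₂| ≥ |k₁| (the real power (|k₄| : ℝ)^{4/5}); (iii) |k₄| > 64·|k₃| and |k₃| ≥ |k₂| ≥ |k₁| and |k₁+k₂+k₃| > 16·|k₁|. Then |Φ_a^(4)(k₁,k₂,k₃,k₄)| > |k₁+k₂+k₃| · |k₄|⁴. -/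
set_option maxHeartbeats 1600000

private lemma phi4_core (s K A E : ℝ) (hs1 : 1 ≤ s) (hK : 17 ≤ K)
    (hA : A ≤ K / 16) (hsK : 32 * s ≤ 9 * K)
    (hE : E ≤ 1 / 5 * (s * K ^ 4)) :
    10 * s ^ 2 * K ^ 3 + 10 * s ^ 3 * K ^ 2 + 5 * s ^ 4 * K + s ^ 5
      + A * (3 * s * K ^ 2) + A * (3 * s ^ 2 * K) + A * s ^ 3 + E
      < 4 * (s * K ^ 4) := by
  have hs0 : (0:ℝ) ≤ s := by linarith
  have hK0 : (0:ℝ) ≤ K := by linarith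
  have hsK' : s ≤ 9 / 32 * K := by linarith
  have hs2 : s ^ 2 ≤ 81 / 1024 * K ^ 2 := by
    nlinarith [mul_le_mul hsK' hsK' hs0 (by linarith : (0:ℝ) ≤ 9 / 32 * K)]
  have hs3 : s ^ 3 ≤ 729 / 32768 * K ^ 3 := by
    nlinarith [mul_le_mul hs2 hsK' hs0 (by positivity : (0:ℝ) ≤ 81 / 1024 * K ^ 2)]
  have hs4 : s ^ 4 ≤ 6561 / 1048576 * K ^ 4 := by
    nlinarith [mul_le_mul hs2 hs2 (by positivity : (0:ℝ) ≤ s ^ 2)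
      (by positivity : (0:ℝ) ≤ 81 / 1024 * K ^ 2)]
  have hK34 : K ^ 3 ≤ 1 / 17 * K ^ 4 := by
    nlinarith [mul_le_mul_of_nonneg_left hK (by positivity : (0:ℝ) ≤ K ^ 3)]
  have t1 : 10 * s ^ 2 * K ^ 3 ≤ 45 / 16 * (s * K ^ 4) := by
    nlinarith [mul_le_mul_of_nonneg_right hsK' (by positivity : (0:ℝ) ≤ s * K ^ 3)]
  have t2 : 10 * s ^ 3 * K ^ 2 ≤ 405 / 512 * (s * K ^ 4) := by
    nlinarith [mul_le_mul_of_nonneg_right hs2 (by positivity : (0:ℝ) ≤ s * K ^ 2)]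
  have t3 : 5 * s ^ 4 * K ≤ 3645 / 32768 * (s * K ^ 4) := by
    nlinarith [mul_le_mul_of_nonneg_right hs3 (by positivity : (0:ℝ) ≤ s * K)]
  have t4 : s ^ 5 ≤ 6561 / 1048576 * (s * K ^ 4) := by
    nlinarith [mul_le_mul_of_nonneg_right hs4 hs0]
  have t5 : A * (3 * s * K ^ 2) ≤ 3 / 272 * (s * K ^ 4) := by
    nlinarith [mul_le_mul_of_nonneg_right hA (by positivity : (0:ℝ) ≤ 3 * s * K ^ 2),
      mul_le_mul_of_nonneg_left hK34 hs0]
  have t6 : A * (3 * s ^ 2 * K) ≤ 27 / 8704 * (s * K ^ 4) := by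
    nlinarith [mul_le_mul_of_nonneg_right hA (by positivity : (0:ℝ) ≤ 3 * s ^ 2 * K),
      mul_le_mul_of_nonneg_right hsK' (by positivity : (0:ℝ) ≤ s * K ^ 2),
      mul_le_mul_of_nonneg_left hK34 hs0]
  have t7 : A * s ^ 3 ≤ 81 / 278528 * (s * K ^ 4) := by
    nlinarith [mul_le_mul_of_nonneg_right hA (by positivity : (0:ℝ) ≤ s ^ 3),
      mul_le_mul_of_nonneg_left (mul_le_mul_of_nonneg_right hs2 hs0)
        (by positivity : (0:ℝ) ≤ K / 16),
      mul_le_mul_of_nonneg_left hK34 hs0]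
  have hpos : (0:ℝ) < s * K ^ 4 := mul_pos (by linarith) (pow_pos (by linarith) 4)
  linarith

private lemma phi4_master (a x y z w : ℝ)
    (hK : 17 ≤ |w|) (ha : 16 * |a| ≤ |w|)
    (hS1 : 1 ≤ |x + y + z|)
    (hSc : 32 * |x + y + z| ≤ 9 * |w|)
    (hE : |x ^ 5 + y ^ 5 + z ^ 5| + |a| * |x ^ 3 + y ^ 3 + z ^ 3|
        ≤ 1 / 5 * (|x + y + z| * |w| ^ 4)) :
    |(-(x + y + z + w) ^ 5 + a * (x + y + z + w) ^ 3) -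
        ((-x ^ 5 + a * x ^ 3) + (-y ^ 5 + a * y ^ 3) + (-z ^ 5 + a * z ^ 3) +
          (-w ^ 5 + a * w ^ 3))| > |x + y + z| * |w| ^ 4 := by
  have hid : (-(x + y + z + w) ^ 5 + a * (x + y + z + w) ^ 3) -
        ((-x ^ 5 + a * x ^ 3) + (-y ^ 5 + a * y ^ 3) + (-z ^ 5 + a * z ^ 3) +
          (-w ^ 5 + a * w ^ 3))
      = -(5 * (x + y + z) * w ^ 4 -
          (-(10 * (x + y + z) ^ 2 * w ^ 3) + -(10 * (x + y + z) ^ 3 * w ^ 2)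
            + -(5 * (x + y + z) ^ 4 * w) + -((x + y + z) ^ 5)
            + a * (3 * (x + y + z) * w ^ 2) + a * (3 * (x + y + z) ^ 2 * w) + a * (x + y + z) ^ 3
            + (x ^ 5 + y ^ 5 + z ^ 5) + -(a * (x ^ 3 + y ^ 3 + z ^ 3)))) := by
    ring
  rw [hid, abs_neg]
  have hmain := abs_sub_abs_le_abs_sub (5 * (x + y + z) * w ^ 4)
    (-(10 * (x + y + z) ^ 2 * w ^ 3) + -(10 * (x + y + z) ^ 3 * w ^ 2)
      + -(5 * (x + y + z) ^ 4 * w) + -((x + y + z) ^ 5)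
      + a * (3 * (x + y + z) * w ^ 2) + a * (3 * (x + y + z) ^ 2 * w) + a * (x + y + z) ^ 3
      + (x ^ 5 + y ^ 5 + z ^ 5) + -(a * (x ^ 3 + y ^ 3 + z ^ 3)))
  have h5 : |5 * (x + y + z) * w ^ 4| = 5 * |x + y + z| * |w| ^ 4 := by
    rw [abs_mul, abs_mul, abs_pow]; norm_num
  have hR : |(-(10 * (x + y + z) ^ 2 * w ^ 3) + -(10 * (x + y + z) ^ 3 * w ^ 2)
            + -(5 * (x + y + z) ^ 4 * w) + -((x + y + z) ^ 5)
            + a * (3 * (x + y + z) * w ^ 2) + a * (3 * (x + y + z) ^ 2 * w) + a * (x + y + z) ^ 3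
            + (x ^ 5 + y ^ 5 + z ^ 5) + -(a * (x ^ 3 + y ^ 3 + z ^ 3)))|
      ≤ 10 * |x + y + z| ^ 2 * |w| ^ 3 + 10 * |x + y + z| ^ 3 * |w| ^ 2
        + 5 * |x + y + z| ^ 4 * |w| + |x + y + z| ^ 5
        + |a| * (3 * |x + y + z| * |w| ^ 2) + |a| * (3 * |x + y + z| ^ 2 * |w|)
        + |a| * |x + y + z| ^ 3
        + (|x ^ 5 + y ^ 5 + z ^ 5| + |a| * |x ^ 3 + y ^ 3 + z ^ 3|) := by
    have e1 : |(-(10 * (x + y + z) ^ 2 * w ^ 3))| = 10 * |x + y + z| ^ 2 * |w| ^ 3 := by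
      rw [abs_neg, abs_mul, abs_mul, abs_pow, abs_pow]; norm_num
    have e2 : |(-(10 * (x + y + z) ^ 3 * w ^ 2))| = 10 * |x + y + z| ^ 3 * |w| ^ 2 := by
      rw [abs_neg, abs_mul, abs_mul, abs_pow, abs_pow]; norm_num
    have e3 : |(-(5 * (x + y + z) ^ 4 * w))| = 5 * |x + y + z| ^ 4 * |w| := by
      rw [abs_neg, abs_mul, abs_mul, abs_pow]; norm_num
    have e4 : |(-((x + y + z) ^ 5))| = |x + y + z| ^ 5 := by rw [abs_neg, abs_pow]
    have e5 : |a * (3 * (x + y + z) * w ^ 2)| = |a| * (3 * |x + y + z| * |w| ^ 2) := by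
      rw [abs_mul, abs_mul, abs_mul, abs_pow]; norm_num
    have e6 : |a * (3 * (x + y + z) ^ 2 * w)| = |a| * (3 * |x + y + z| ^ 2 * |w|) := by
      rw [abs_mul, abs_mul, abs_mul, abs_pow]; norm_num
    have e7 : |a * (x + y + z) ^ 3| = |a| * |x + y + z| ^ 3 := by rw [abs_mul, abs_pow]
    have e9 : |(-(a * (x ^ 3 + y ^ 3 + z ^ 3)))| = |a| * |x ^ 3 + y ^ 3 + z ^ 3| := by
      rw [abs_neg, abs_mul]
    have a1 := abs_add_le (-(10 * (x + y + z) ^ 2 * w ^ 3) + -(10 * (x + y + z) ^ 3 * w ^ 2)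
      + -(5 * (x + y + z) ^ 4 * w) + -((x + y + z) ^ 5)
      + a * (3 * (x + y + z) * w ^ 2) + a * (3 * (x + y + z) ^ 2 * w) + a * (x + y + z) ^ 3
      + (x ^ 5 + y ^ 5 + z ^ 5)) (-(a * (x ^ 3 + y ^ 3 + z ^ 3)))
    have a2 := abs_add_le (-(10 * (x + y + z) ^ 2 * w ^ 3) + -(10 * (x + y + z) ^ 3 * w ^ 2)
      + -(5 * (x + y + z) ^ 4 * w) + -((x + y + z) ^ 5)
      + a * (3 * (x + y + z) * w ^ 2) + a * (3 * (x + y + z) ^ 2 * w) + a * (x + y + z) ^ 3)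
      (x ^ 5 + y ^ 5 + z ^ 5)
    have a3 := abs_add_le (-(10 * (x + y + z) ^ 2 * w ^ 3) + -(10 * (x + y + z) ^ 3 * w ^ 2)
      + -(5 * (x + y + z) ^ 4 * w) + -((x + y + z) ^ 5)
      + a * (3 * (x + y + z) * w ^ 2) + a * (3 * (x + y + z) ^ 2 * w)) (a * (x + y + z) ^ 3)
    have a4 := abs_add_le (-(10 * (x + y + z) ^ 2 * w ^ 3) + -(10 * (x + y + z) ^ 3 * w ^ 2)
      + -(5 * (x + y + z) ^ 4 * w) + -((x + y + z) ^ 5)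
      + a * (3 * (x + y + z) * w ^ 2)) (a * (3 * (x + y + z) ^ 2 * w))
    have a5 := abs_add_le (-(10 * (x + y + z) ^ 2 * w ^ 3) + -(10 * (x + y + z) ^ 3 * w ^ 2)
      + -(5 * (x + y + z) ^ 4 * w) + -((x + y + z) ^ 5)) (a * (3 * (x + y + z) * w ^ 2))
    have a6 := abs_add_le (-(10 * (x + y + z) ^ 2 * w ^ 3) + -(10 * (x + y + z) ^ 3 * w ^ 2)
      + -(5 * (x + y + z) ^ 4 * w)) (-((x + y + z) ^ 5))
    have a7 := abs_add_le (-(10 * (x + y + z) ^ 2 * w ^ 3) + -(10 * (x + y + z) ^ 3 * w ^ 2))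
      (-(5 * (x + y + z) ^ 4 * w))
    have a8 := abs_add_le (-(10 * (x + y + z) ^ 2 * w ^ 3)) (-(10 * (x + y + z) ^ 3 * w ^ 2))
    simp only [e1, e2, e3, e4, e5, e6, e7, e9] at a1 a2 a3 a4 a5 a6 a7 a8
    linarith only [a1, a2, a3, a4, a5, a6, a7, a8]
  have hcore := phi4_core (|x + y + z|) (|w|) (|a|)
    (|x ^ 5 + y ^ 5 + z ^ 5| + |a| * |x ^ 3 + y ^ 3 + z ^ 3|)
    hS1 hK (by linarith) hSc hE
  linarith only [hmain, h5, hR, hcore]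

/-- Lower bound for the quartic phase under the strengthened frequency assumptions
(i), (ii) or (iii). -/
theorem phi4_lower_bound (a : ℝ) (k₁ k₂ k₃ k₄ : ℤ)
    (hk₄ : ((|k₄| : ℤ) : ℝ) > 16 * max 1 |a|)
    (hNR : k₁ + k₂ + k₃ ≠ 0)
    (hcase :
      (|k₄| > 4 * |k₃| ∧ |k₃| > 16 * |k₂| ∧ |k₂| ≥ |k₁|) ∨
      (((|k₄| : ℤ) : ℝ) ^ ((4 : ℝ) / 5) > 64 * ((|k₃| : ℤ) : ℝ) ∧ |k₃| ≥ |k₂| ∧ |k₂| ≥ |k₁|) ∨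
      (|k₄| > 64 * |k₃| ∧ |k₃| ≥ |k₂| ∧ |k₂| ≥ |k₁| ∧ |k₁ + k₂ + k₃| > 16 * |k₁|)) :
    |Phi4 a k₁ k₂ k₃ k₄| > ((|k₁ + k₂ + k₃| : ℤ) : ℝ) * ((|k₄| : ℤ) : ℝ) ^ 4 := by
  have c4 : ((|k₄| : ℤ) : ℝ) = |(k₄ : ℝ)| := by push_cast; ring
  have c3 : ((|k₃| : ℤ) : ℝ) = |(k₃ : ℝ)| := by push_cast; ring
  have cS : ((|k₁ + k₂ + k₃| : ℤ) : ℝ) = |(k₁ : ℝ) + (k₂ : ℝ) + (k₃ : ℝ)| := by push_cast; ring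
  have hmax1 : (1:ℝ) ≤ max 1 |a| := le_max_left _ _
  have hmaxa : |a| ≤ max 1 |a| := le_max_right _ _
  have hD16 : (16:ℝ) < ((|k₄| : ℤ) : ℝ) := by linarith only [hk₄, hmax1]
  have hZ17 : (17:ℤ) ≤ |k₄| := by
    have : (16:ℤ) < |k₄| := by exact_mod_cast hD16
    omega
  have hK17 : (17:ℝ) ≤ |(k₄:ℝ)| := by rw [← c4]; exact_mod_cast hZ17
  have ha16 : 16 * |a| ≤ |(k₄:ℝ)| := by rw [← c4]; linarith only [hk₄, hmaxa]
  have hS1 : 1 ≤ |(k₁:ℝ) + (k₂:ℝ) + (k₃:ℝ)| := by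
    rw [← cS]; exact_mod_cast Int.one_le_abs hNR
  have hPhi : Phi4 a k₁ k₂ k₃ k₄ =
      (-((k₁:ℝ) + (k₂:ℝ) + (k₃:ℝ) + (k₄:ℝ)) ^ 5
          + a * ((k₁:ℝ) + (k₂:ℝ) + (k₃:ℝ) + (k₄:ℝ)) ^ 3) -
        ((-(k₁:ℝ) ^ 5 + a * (k₁:ℝ) ^ 3) + (-(k₂:ℝ) ^ 5 + a * (k₂:ℝ) ^ 3) +
          (-(k₃:ℝ) ^ 5 + a * (k₃:ℝ) ^ 3) + (-(k₄:ℝ) ^ 5 + a * (k₄:ℝ) ^ 3)) := by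
    unfold Phi4 p; push_cast; ring
  rw [hPhi, cS, c4]
  -- common abbreviations / facts
  have A0 : (0:ℝ) ≤ |(k₁:ℝ)| := abs_nonneg _
  have B0 : (0:ℝ) ≤ |(k₂:ℝ)| := abs_nonneg _
  have C0 : (0:ℝ) ≤ |(k₃:ℝ)| := abs_nonneg _
  have s0 : (0:ℝ) ≤ |(k₁:ℝ) + (k₂:ℝ) + (k₃:ℝ)| := abs_nonneg _
  have D0 : (0:ℝ) ≤ |(k₄:ℝ)| := abs_nonneg _
  have haD : |a| ≤ |(k₄:ℝ)| / 16 := by linarith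
  have htri1 : |(k₁:ℝ) + (k₂:ℝ) + (k₃:ℝ)| ≤ |(k₁:ℝ)| + |(k₂:ℝ)| + |(k₃:ℝ)| := by
    have h1 := abs_add_le ((k₁:ℝ) + (k₂:ℝ)) ((k₃:ℝ))
    have h2 := abs_add_le ((k₁:ℝ)) ((k₂:ℝ))
    linarith
  have htri2 : |(k₃:ℝ)| ≤ |(k₁:ℝ) + (k₂:ℝ) + (k₃:ℝ)| + (|(k₁:ℝ)| + |(k₂:ℝ)|) := by
    have h0 := abs_sub ((k₁:ℝ) + (k₂:ℝ) + (k₃:ℝ)) ((k₁:ℝ) + (k₂:ℝ))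
    have e : (k₁:ℝ) + (k₂:ℝ) + (k₃:ℝ) - ((k₁:ℝ) + (k₂:ℝ)) = (k₃:ℝ) := by ring
    rw [e] at h0
    have h2 := abs_add_le ((k₁:ℝ)) ((k₂:ℝ))
    linarith
  have hyz : |(k₂:ℝ) + (k₃:ℝ)| ≤ |(k₁:ℝ) + (k₂:ℝ) + (k₃:ℝ)| + |(k₁:ℝ)| := by
    have h0 := abs_sub ((k₁:ℝ) + (k₂:ℝ) + (k₃:ℝ)) ((k₁:ℝ))
    have e : (k₁:ℝ) + (k₂:ℝ) + (k₃:ℝ) - (k₁:ℝ) = (k₂:ℝ) + (k₃:ℝ) := by ring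
    rw [e] at h0
    linarith
  have hP5tri : |(k₁:ℝ)^5 + (k₂:ℝ)^5 + (k₃:ℝ)^5| ≤ |(k₁:ℝ)|^5 + |(k₂:ℝ)|^5 + |(k₃:ℝ)|^5 := by
    have h1 := abs_add_le ((k₁:ℝ)^5 + (k₂:ℝ)^5) ((k₃:ℝ)^5)
    have h2 := abs_add_le ((k₁:ℝ)^5) ((k₂:ℝ)^5)
    simp only [abs_pow] at h1 h2
    linarith
  have hP3tri : |(k₁:ℝ)^3 + (k₂:ℝ)^3 + (k₃:ℝ)^3| ≤ |(k₁:ℝ)|^3 + |(k₂:ℝ)|^3 + |(k₃:ℝ)|^3 := by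
    have h1 := abs_add_le ((k₁:ℝ)^3 + (k₂:ℝ)^3) ((k₃:ℝ)^3)
    have h2 := abs_add_le ((k₁:ℝ)^3) ((k₂:ℝ)^3)
    simp only [abs_pow] at h1 h2
    linarith
  have hD34 : |(k₄:ℝ)|^3 ≤ |(k₄:ℝ)|^4 / 17 := by
    linarith only [mul_le_mul_of_nonneg_left hK17 (by positivity : (0:ℝ) ≤ |(k₄:ℝ)|^3)]
  have hsD0 : (0:ℝ) ≤ |(k₁:ℝ) + (k₂:ℝ) + (k₃:ℝ)| * |(k₄:ℝ)|^4 := by positivity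
  rcases hcase with ⟨h1, h2, h3⟩ | ⟨h1, h2, h3⟩ | ⟨h1, h2, h3, h4⟩
  · -- case (i)
    have r1 : |(k₄:ℝ)| > 4 * |(k₃:ℝ)| := by exact_mod_cast h1
    have r2 : |(k₃:ℝ)| > 16 * |(k₂:ℝ)| := by exact_mod_cast h2
    have r3 : |(k₂:ℝ)| ≥ |(k₁:ℝ)| := by exact_mod_cast h3
    have hAC : |(k₁:ℝ)| ≤ |(k₃:ℝ)| := by linarith
    have hBC : |(k₂:ℝ)| ≤ |(k₃:ℝ)| := by linarith
    have hCs : |(k₃:ℝ)| ≤ 8/7 * |(k₁:ℝ) + (k₂:ℝ) + (k₃:ℝ)| := by linarith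
    have hCD : |(k₃:ℝ)| ≤ |(k₄:ℝ)| / 4 := by linarith
    have hSc : 32 * |(k₁:ℝ) + (k₂:ℝ) + (k₃:ℝ)| ≤ 9 * |(k₄:ℝ)| := by linarith
    have hC4 : |(k₃:ℝ)|^4 ≤ |(k₄:ℝ)|^4 / 256 := by
      calc |(k₃:ℝ)|^4 ≤ (|(k₄:ℝ)| / 4)^4 := pow_le_pow_left₀ C0 hCD 4
        _ = |(k₄:ℝ)|^4 / 256 := by ring
    have hC2 : |(k₃:ℝ)|^2 ≤ |(k₄:ℝ)|^2 / 16 := by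
      calc |(k₃:ℝ)|^2 ≤ (|(k₄:ℝ)| / 4)^2 := pow_le_pow_left₀ C0 hCD 2
        _ = |(k₄:ℝ)|^2 / 16 := by ring
    have hC5s : |(k₃:ℝ)|^5 ≤ (8/7 * |(k₁:ℝ) + (k₂:ℝ) + (k₃:ℝ)|) * (|(k₄:ℝ)|^4 / 256) := by
      calc |(k₃:ℝ)|^5 = |(k₃:ℝ)| * |(k₃:ℝ)|^4 := by ring
        _ ≤ (8/7 * |(k₁:ℝ) + (k₂:ℝ) + (k₃:ℝ)|) * (|(k₄:ℝ)|^4 / 256) :=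
            mul_le_mul hCs hC4 (by positivity) (by positivity)
    have hC3s : |(k₃:ℝ)|^3 ≤ (8/7 * |(k₁:ℝ) + (k₂:ℝ) + (k₃:ℝ)|) * (|(k₄:ℝ)|^2 / 16) := by
      calc |(k₃:ℝ)|^3 = |(k₃:ℝ)| * |(k₃:ℝ)|^2 := by ring
        _ ≤ (8/7 * |(k₁:ℝ) + (k₂:ℝ) + (k₃:ℝ)|) * (|(k₄:ℝ)|^2 / 16) :=
            mul_le_mul hCs hC2 (by positivity) (by positivity)
    have hP5 : |(k₁:ℝ)^5 + (k₂:ℝ)^5 + (k₃:ℝ)^5| ≤ 3 * |(k₃:ℝ)|^5 := by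
      have p1 : |(k₁:ℝ)|^5 ≤ |(k₃:ℝ)|^5 := pow_le_pow_left₀ A0 hAC 5
      have p2 : |(k₂:ℝ)|^5 ≤ |(k₃:ℝ)|^5 := pow_le_pow_left₀ B0 hBC 5
      linarith
    have hP3 : |(k₁:ℝ)^3 + (k₂:ℝ)^3 + (k₃:ℝ)^3| ≤ 3 * |(k₃:ℝ)|^3 := by
      have p1 : |(k₁:ℝ)|^3 ≤ |(k₃:ℝ)|^3 := pow_le_pow_left₀ A0 hAC 3
      have p2 : |(k₂:ℝ)|^3 ≤ |(k₃:ℝ)|^3 := pow_le_pow_left₀ B0 hBC 3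
      linarith
    refine phi4_master a _ _ _ _ hK17 ha16 hS1 hSc ?_
    have A1 : |a| * |(k₁:ℝ)^3 + (k₂:ℝ)^3 + (k₃:ℝ)^3| ≤ (|(k₄:ℝ)| / 16) * (3 * |(k₃:ℝ)|^3) :=
      mul_le_mul haD hP3 (abs_nonneg _) (by positivity)
    have A2 : (|(k₄:ℝ)| / 16) * (3 * |(k₃:ℝ)|^3)
        ≤ (|(k₄:ℝ)| / 16) * (3 * ((8/7 * |(k₁:ℝ) + (k₂:ℝ) + (k₃:ℝ)|) * (|(k₄:ℝ)|^2 / 16))) :=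
      mul_le_mul_of_nonneg_left (by linarith) (by positivity)
    have A3 : |(k₁:ℝ) + (k₂:ℝ) + (k₃:ℝ)| * |(k₄:ℝ)|^3
        ≤ |(k₁:ℝ) + (k₂:ℝ) + (k₃:ℝ)| * (|(k₄:ℝ)|^4 / 17) :=
      mul_le_mul_of_nonneg_left hD34 s0
    linarith only [hP5, hC5s, A1, A2, A3, hsD0]
  · -- case (ii)
    rw [c4, c3] at h1
    have r2 : |(k₂:ℝ)| ≤ |(k₃:ℝ)| := by exact_mod_cast h2
    have r3 : |(k₁:ℝ)| ≤ |(k₂:ℝ)| := by exact_mod_cast h3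
    have hr0 : (0:ℝ) ≤ |(k₄:ℝ)| ^ ((4:ℝ)/5) := Real.rpow_nonneg D0 _
    have hrD : |(k₄:ℝ)| ^ ((4:ℝ)/5) ≤ |(k₄:ℝ)| := by
      calc |(k₄:ℝ)| ^ ((4:ℝ)/5) ≤ |(k₄:ℝ)| ^ (1:ℝ) :=
            Real.rpow_le_rpow_of_exponent_le (by linarith) (by norm_num)
        _ = |(k₄:ℝ)| := Real.rpow_one _
    have hr5 : (|(k₄:ℝ)| ^ ((4:ℝ)/5)) ^ (5:ℕ) = |(k₄:ℝ)| ^ (4:ℕ) := by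
      rw [← Real.rpow_natCast (|(k₄:ℝ)| ^ ((4:ℝ)/5)) 5, ← Real.rpow_mul D0,
        show ((4:ℝ)/5 * ((5:ℕ):ℝ)) = ((4:ℕ):ℝ) from by norm_num, Real.rpow_natCast]
    have hCr : |(k₃:ℝ)| ≤ |(k₄:ℝ)| ^ ((4:ℝ)/5) / 64 := by linarith
    have hCD : |(k₃:ℝ)| ≤ |(k₄:ℝ)| / 64 := by linarith
    have hSc : 32 * |(k₁:ℝ) + (k₂:ℝ) + (k₃:ℝ)| ≤ 9 * |(k₄:ℝ)| := by linarith
    have hC5 : |(k₃:ℝ)|^5 ≤ |(k₄:ℝ)|^4 / 1073741824 := by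
      calc |(k₃:ℝ)|^5 ≤ (|(k₄:ℝ)| ^ ((4:ℝ)/5) / 64)^5 := pow_le_pow_left₀ C0 hCr 5
        _ = (|(k₄:ℝ)| ^ ((4:ℝ)/5)) ^ (5:ℕ) / 1073741824 := by ring
        _ = |(k₄:ℝ)|^4 / 1073741824 := by rw [hr5]
    have hC3 : |(k₃:ℝ)|^3 ≤ |(k₄:ℝ)|^3 / 262144 := by
      calc |(k₃:ℝ)|^3 ≤ (|(k₄:ℝ)| / 64)^3 := pow_le_pow_left₀ C0 hCD 3
        _ = |(k₄:ℝ)|^3 / 262144 := by ring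
    have hP5 : |(k₁:ℝ)^5 + (k₂:ℝ)^5 + (k₃:ℝ)^5| ≤ 3 * |(k₃:ℝ)|^5 := by
      have p1 : |(k₁:ℝ)|^5 ≤ |(k₃:ℝ)|^5 := pow_le_pow_left₀ A0 (by linarith) 5
      have p2 : |(k₂:ℝ)|^5 ≤ |(k₃:ℝ)|^5 := pow_le_pow_left₀ B0 (by linarith) 5
      linarith
    have hP3 : |(k₁:ℝ)^3 + (k₂:ℝ)^3 + (k₃:ℝ)^3| ≤ 3 * |(k₃:ℝ)|^3 := by
      have p1 : |(k₁:ℝ)|^3 ≤ |(k₃:ℝ)|^3 := pow_le_pow_left₀ A0 (by linarith) 3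
      have p2 : |(k₂:ℝ)|^3 ≤ |(k₃:ℝ)|^3 := pow_le_pow_left₀ B0 (by linarith) 3
      linarith
    have hD4s : |(k₄:ℝ)|^4 ≤ |(k₁:ℝ) + (k₂:ℝ) + (k₃:ℝ)| * |(k₄:ℝ)|^4 := by
      exact le_mul_of_one_le_left (pow_nonneg D0 4) hS1
    refine phi4_master a _ _ _ _ hK17 ha16 hS1 hSc ?_
    have A1 : |a| * |(k₁:ℝ)^3 + (k₂:ℝ)^3 + (k₃:ℝ)^3| ≤ (|(k₄:ℝ)| / 16) * (3 * |(k₃:ℝ)|^3) :=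
      mul_le_mul haD hP3 (abs_nonneg _) (by positivity)
    have A2 : (|(k₄:ℝ)| / 16) * (3 * |(k₃:ℝ)|^3)
        ≤ (|(k₄:ℝ)| / 16) * (3 * (|(k₄:ℝ)|^3 / 262144)) :=
      mul_le_mul_of_nonneg_left (by linarith) (by positivity)
    linarith only [hP5, hC5, A1, A2, hD4s, hsD0]
  · -- case (iii)
    have r1 : |(k₄:ℝ)| > 64 * |(k₃:ℝ)| := by exact_mod_cast h1
    have r2 : |(k₂:ℝ)| ≤ |(k₃:ℝ)| := by exact_mod_cast h2
    have r3 : |(k₁:ℝ)| ≤ |(k₂:ℝ)| := by exact_mod_cast h3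
    have r4 : |(k₁:ℝ) + (k₂:ℝ) + (k₃:ℝ)| > 16 * |(k₁:ℝ)| := by exact_mod_cast h4
    have hCD : |(k₃:ℝ)| ≤ |(k₄:ℝ)| / 64 := by linarith
    have hSc : 32 * |(k₁:ℝ) + (k₂:ℝ) + (k₃:ℝ)| ≤ 9 * |(k₄:ℝ)| := by linarith
    have hA16 : |(k₁:ℝ)| ≤ |(k₁:ℝ) + (k₂:ℝ) + (k₃:ℝ)| / 16 := by linarith
    have hAC : |(k₁:ℝ)| ≤ |(k₃:ℝ)| := by linarith
    have hy : |(k₂:ℝ)| ≤ |(k₃:ℝ)| := r2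
    have hz : |(k₃:ℝ)| ≤ |(k₃:ℝ)| := le_refl _
    -- bound the symmetric factor of y^5+z^5
    have hQ : |(k₂:ℝ)^4 - (k₂:ℝ)^3*(k₃:ℝ) + (k₂:ℝ)^2*(k₃:ℝ)^2 - (k₂:ℝ)*(k₃:ℝ)^3 + (k₃:ℝ)^4|
        ≤ 5 * |(k₃:ℝ)|^4 := by
      have b1 := abs_add_le ((k₂:ℝ)^4 - (k₂:ℝ)^3*(k₃:ℝ) + (k₂:ℝ)^2*(k₃:ℝ)^2 - (k₂:ℝ)*(k₃:ℝ)^3)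
        ((k₃:ℝ)^4)
      have b2 := abs_sub ((k₂:ℝ)^4 - (k₂:ℝ)^3*(k₃:ℝ) + (k₂:ℝ)^2*(k₃:ℝ)^2) ((k₂:ℝ)*(k₃:ℝ)^3)
      have b3 := abs_add_le ((k₂:ℝ)^4 - (k₂:ℝ)^3*(k₃:ℝ)) ((k₂:ℝ)^2*(k₃:ℝ)^2)
      have b4 := abs_sub ((k₂:ℝ)^4) ((k₂:ℝ)^3*(k₃:ℝ))
      have q1 : |(k₂:ℝ)^4| ≤ |(k₃:ℝ)|^4 := by
        rw [abs_pow]; exact pow_le_pow_left₀ B0 hy 4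
      have q2 : |(k₂:ℝ)^3*(k₃:ℝ)| ≤ |(k₃:ℝ)|^4 := by
        rw [abs_mul, abs_pow]
        calc |(k₂:ℝ)|^3 * |(k₃:ℝ)| ≤ |(k₃:ℝ)|^3 * |(k₃:ℝ)| :=
              mul_le_mul (pow_le_pow_left₀ B0 hy 3) hz C0 (by positivity)
          _ = |(k₃:ℝ)|^4 := by ring
      have q3 : |(k₂:ℝ)^2*(k₃:ℝ)^2| ≤ |(k₃:ℝ)|^4 := by
        rw [abs_mul, abs_pow, abs_pow]
        calc |(k₂:ℝ)|^2 * |(k₃:ℝ)|^2 ≤ |(k₃:ℝ)|^2 * |(k₃:ℝ)|^2 :=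
              mul_le_mul (pow_le_pow_left₀ B0 hy 2) (le_refl _) (by positivity) (by positivity)
          _ = |(k₃:ℝ)|^4 := by ring
      have q4 : |(k₂:ℝ)*(k₃:ℝ)^3| ≤ |(k₃:ℝ)|^4 := by
        rw [abs_mul, abs_pow]
        calc |(k₂:ℝ)| * |(k₃:ℝ)|^3 ≤ |(k₃:ℝ)| * |(k₃:ℝ)|^3 :=
              mul_le_mul hy (le_refl _) (by positivity) C0
          _ = |(k₃:ℝ)|^4 := by ring
      have q5 : |(k₃:ℝ)^4| ≤ |(k₃:ℝ)|^4 := by rw [abs_pow]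
      linarith
    have hQ3 : |(k₂:ℝ)^2 - (k₂:ℝ)*(k₃:ℝ) + (k₃:ℝ)^2| ≤ 3 * |(k₃:ℝ)|^2 := by
      have b1 := abs_add_le ((k₂:ℝ)^2 - (k₂:ℝ)*(k₃:ℝ)) ((k₃:ℝ)^2)
      have b2 := abs_sub ((k₂:ℝ)^2) ((k₂:ℝ)*(k₃:ℝ))
      have q1 : |(k₂:ℝ)^2| ≤ |(k₃:ℝ)|^2 := by
        rw [abs_pow]; exact pow_le_pow_left₀ B0 hy 2
      have q2 : |(k₂:ℝ)*(k₃:ℝ)| ≤ |(k₃:ℝ)|^2 := by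
        rw [abs_mul]
        calc |(k₂:ℝ)| * |(k₃:ℝ)| ≤ |(k₃:ℝ)| * |(k₃:ℝ)| := mul_le_mul hy (le_refl _) C0 C0
          _ = |(k₃:ℝ)|^2 := by ring
      have q3 : |(k₃:ℝ)^2| ≤ |(k₃:ℝ)|^2 := by rw [abs_pow]
      linarith
    have hfac5 : (k₂:ℝ)^5 + (k₃:ℝ)^5 = ((k₂:ℝ) + (k₃:ℝ)) *
        ((k₂:ℝ)^4 - (k₂:ℝ)^3*(k₃:ℝ) + (k₂:ℝ)^2*(k₃:ℝ)^2 - (k₂:ℝ)*(k₃:ℝ)^3 + (k₃:ℝ)^4) := by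
      ring
    have hfac3 : (k₂:ℝ)^3 + (k₃:ℝ)^3 = ((k₂:ℝ) + (k₃:ℝ)) *
        ((k₂:ℝ)^2 - (k₂:ℝ)*(k₃:ℝ) + (k₃:ℝ)^2) := by ring
    have hY5 : |(k₂:ℝ)^5 + (k₃:ℝ)^5|
        ≤ (|(k₁:ℝ) + (k₂:ℝ) + (k₃:ℝ)| + |(k₁:ℝ)|) * (5 * |(k₃:ℝ)|^4) := by
      rw [hfac5, abs_mul]
      exact mul_le_mul hyz hQ (abs_nonneg _) (by positivity)
    have hY3 : |(k₂:ℝ)^3 + (k₃:ℝ)^3|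
        ≤ (|(k₁:ℝ) + (k₂:ℝ) + (k₃:ℝ)| + |(k₁:ℝ)|) * (3 * |(k₃:ℝ)|^2) := by
      rw [hfac3, abs_mul]
      exact mul_le_mul hyz hQ3 (abs_nonneg _) (by positivity)
    have hX5 : |(k₁:ℝ)^5| ≤ (|(k₁:ℝ) + (k₂:ℝ) + (k₃:ℝ)| / 16) * |(k₃:ℝ)|^4 := by
      rw [abs_pow]
      calc |(k₁:ℝ)|^5 = |(k₁:ℝ)| * |(k₁:ℝ)|^4 := by ring
        _ ≤ (|(k₁:ℝ) + (k₂:ℝ) + (k₃:ℝ)| / 16) * |(k₃:ℝ)|^4 :=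
            mul_le_mul hA16 (pow_le_pow_left₀ A0 hAC 4) (by positivity) (by positivity)
    have hX3 : |(k₁:ℝ)^3| ≤ (|(k₁:ℝ) + (k₂:ℝ) + (k₃:ℝ)| / 16) * |(k₃:ℝ)|^2 := by
      rw [abs_pow]
      calc |(k₁:ℝ)|^3 = |(k₁:ℝ)| * |(k₁:ℝ)|^2 := by ring
        _ ≤ (|(k₁:ℝ) + (k₂:ℝ) + (k₃:ℝ)| / 16) * |(k₃:ℝ)|^2 :=
            mul_le_mul hA16 (pow_le_pow_left₀ A0 hAC 2) (by positivity) (by positivity)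
    have hsplit5 : |(k₁:ℝ)^5 + (k₂:ℝ)^5 + (k₃:ℝ)^5|
        ≤ |(k₁:ℝ)^5| + |(k₂:ℝ)^5 + (k₃:ℝ)^5| := by
      have e : (k₁:ℝ)^5 + (k₂:ℝ)^5 + (k₃:ℝ)^5 = (k₁:ℝ)^5 + ((k₂:ℝ)^5 + (k₃:ℝ)^5) := by ring
      rw [e]; exact abs_add_le _ _
    have hsplit3 : |(k₁:ℝ)^3 + (k₂:ℝ)^3 + (k₃:ℝ)^3|
        ≤ |(k₁:ℝ)^3| + |(k₂:ℝ)^3 + (k₃:ℝ)^3| := by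
      have e : (k₁:ℝ)^3 + (k₂:ℝ)^3 + (k₃:ℝ)^3 = (k₁:ℝ)^3 + ((k₂:ℝ)^3 + (k₃:ℝ)^3) := by ring
      rw [e]; exact abs_add_le _ _
    have hsA : (|(k₁:ℝ) + (k₂:ℝ) + (k₃:ℝ)| + |(k₁:ℝ)|)
        ≤ 17/16 * |(k₁:ℝ) + (k₂:ℝ) + (k₃:ℝ)| := by linarith
    have hY5' : (|(k₁:ℝ) + (k₂:ℝ) + (k₃:ℝ)| + |(k₁:ℝ)|) * (5 * |(k₃:ℝ)|^4)
        ≤ (17/16 * |(k₁:ℝ) + (k₂:ℝ) + (k₃:ℝ)|) * (5 * |(k₃:ℝ)|^4) :=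
      mul_le_mul_of_nonneg_right hsA (by positivity)
    have hY3' : (|(k₁:ℝ) + (k₂:ℝ) + (k₃:ℝ)| + |(k₁:ℝ)|) * (3 * |(k₃:ℝ)|^2)
        ≤ (17/16 * |(k₁:ℝ) + (k₂:ℝ) + (k₃:ℝ)|) * (3 * |(k₃:ℝ)|^2) :=
      mul_le_mul_of_nonneg_right hsA (by positivity)
    have hP5tot : |(k₁:ℝ)^5 + (k₂:ℝ)^5 + (k₃:ℝ)^5|
        ≤ 86/16 * (|(k₁:ℝ) + (k₂:ℝ) + (k₃:ℝ)| * |(k₃:ℝ)|^4) := by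
      linarith only [hsplit5, hX5, hY5, hY5']
    have hP3tot : |(k₁:ℝ)^3 + (k₂:ℝ)^3 + (k₃:ℝ)^3|
        ≤ 52/16 * (|(k₁:ℝ) + (k₂:ℝ) + (k₃:ℝ)| * |(k₃:ℝ)|^2) := by
      linarith only [hsplit3, hX3, hY3, hY3']
    have hC4D : |(k₃:ℝ)|^4 ≤ |(k₄:ℝ)|^4 / 16777216 := by
      calc |(k₃:ℝ)|^4 ≤ (|(k₄:ℝ)| / 64)^4 := pow_le_pow_left₀ C0 hCD 4
        _ = |(k₄:ℝ)|^4 / 16777216 := by ring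
    have hC2D : |(k₃:ℝ)|^2 ≤ |(k₄:ℝ)|^2 / 4096 := by
      calc |(k₃:ℝ)|^2 ≤ (|(k₄:ℝ)| / 64)^2 := pow_le_pow_left₀ C0 hCD 2
        _ = |(k₄:ℝ)|^2 / 4096 := by ring
    have M4 : |(k₁:ℝ) + (k₂:ℝ) + (k₃:ℝ)| * |(k₃:ℝ)|^4
        ≤ |(k₁:ℝ) + (k₂:ℝ) + (k₃:ℝ)| * (|(k₄:ℝ)|^4 / 16777216) :=
      mul_le_mul_of_nonneg_left hC4D s0
    have M2 : |(k₁:ℝ) + (k₂:ℝ) + (k₃:ℝ)| * |(k₃:ℝ)|^2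
        ≤ |(k₁:ℝ) + (k₂:ℝ) + (k₃:ℝ)| * (|(k₄:ℝ)|^2 / 4096) :=
      mul_le_mul_of_nonneg_left hC2D s0
    refine phi4_master a _ _ _ _ hK17 ha16 hS1 hSc ?_
    have A1 : |a| * |(k₁:ℝ)^3 + (k₂:ℝ)^3 + (k₃:ℝ)^3|
        ≤ (|(k₄:ℝ)| / 16) * (52/16 * (|(k₁:ℝ) + (k₂:ℝ) + (k₃:ℝ)| * |(k₃:ℝ)|^2)) :=
      mul_le_mul haD hP3tot (abs_nonneg _) (by positivity)
    have A2 : (|(k₄:ℝ)| / 16) * (52/16 * (|(k₁:ℝ) + (k₂:ℝ) + (k₃:ℝ)| * |(k₃:ℝ)|^2))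
        ≤ (|(k₄:ℝ)| / 16) * (52/16 * (|(k₁:ℝ) + (k₂:ℝ) + (k₃:ℝ)| * (|(k₄:ℝ)|^2 / 4096))) :=
      mul_le_mul_of_nonneg_left (by linarith) (by positivity)
    have A3 : |(k₁:ℝ) + (k₂:ℝ) + (k₃:ℝ)| * |(k₄:ℝ)|^3
        ≤ |(k₁:ℝ) + (k₂:ℝ) + (k₃:ℝ)| * (|(k₄:ℝ)|^4 / 17) :=
      mul_le_mul_of_nonneg_left hD34 s0
    linarith only [hP5tot, M4, A1, A2, A3, hsD0]
end

section
/- There exists a constant C > 0 with the following property. Let a, b be real numbers and k₁, k₂, k₃, k₄ integers with |k₄| > 16·max{1, |a|, |b|} and k₁+k₂+k₃ ≠ 0, and assume at least one of: (i) |k₄| > 4·|k₃| and |k₃| > 16·|k₂| and |k₂| ≥ |k₁|; (ii) |k₄|^{4/5} > 64·|k₃| and |k₃| ≥ |k₂| ≥ |k₁|; (iii) |k₄| > 64·|k₃| and |k₃| ≥ |k₂| ≥ |k₁| and |k₁+k₂+k₃| > 16·|k₁|. Then Φ_a^(4)(k₁,k₂,k₃,k₄) ≠ 0, Φ_b^(4)(k₁,k₂,k₃,k₄)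 ≠ 0, and |1/Φ_a^(4)(k₁,k₂,k₃,k₄) − 1/Φ_b^(4)(k₁,k₂,k₃,k₄)| ≤ C · (|a−b| / (|k₁+k₂+k₃|·|k₄|)) · min{ 1/|Φ_a^(4)(k₁,k₂,k₃,k₄)|, 1/|Φ_b^(4)(k₁,k₂,k₃,k₄)| }. -/
/-!
Write `m = k₁ + k₂ + k₃` and `σ = (k₁ + k₂)(k₂ + k₃)(k₁ + k₃)`. Splitting the total frequency as
`m + k₄` gives `Φ_a = Φ⁽²⁾(m, k₄) + Φ⁽³⁾(k₁, k₂, k₃)` with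
`Φ⁽²⁾(m, n) = m n (m + n) (3a - 5(m² + mn + n²))` and `Φ⁽³⁾ = σ (3a - 5/2 (m² + k₁² + k₂² + k₃²))`.
When `|m| ≤ 9/32 |k₄|` and `|a| ≤ |k₄|/16` the two-wave part has size at least `2 |m| |k₄|⁴`,
and each of (i)–(iii) forces `|σ| ≲ |k₄|³` and `|σ| (m² + k₁² + k₂² + k₃²) ≲ |m| |k₄|⁴`,
so `|Φ_a| ≥ |m| |k₄|⁴`. The crux is trading one power of `|k₃|` in `|σ| |k₃|² ≲ |k₃|⁵`:
in (i) `k₁ + k₂` is negligible against `k₃`, so `|k₃| ≲ |m|`; in (ii) `|k₃|⁵ ≲ |k₄|⁴` and `|m| ≥ 1`;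
in (iii) the factor `k₂ + k₃ = m - k₁` of `σ` is comparable to `m`.
Finally `Φ_a` is affine in `a` with slope `(Σ kⱼ)³ - Σ kⱼ³ = O(|k₄|³)`, and
`1/Φ_a - 1/Φ_b = (Φ_b - Φ_a)/(Φ_a Φ_b)` gives the estimate with `C = 2`.
-/

def cubicResonance (x₁ x₂ x₃ : ℝ) : ℝ := (x₁ + x₂) * (x₂ + x₃) * (x₁ + x₃)

structure FrequencyBounds (x₁ x₂ x₃ x₄ : ℝ) : Prop where
  abs_sum_le : |x₁ + x₂ + x₃| ≤ 9 / 32 * |x₄|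
  abs_cubicResonance_le : |cubicResonance x₁ x₂ x₃| ≤ |x₄| ^ 3 / 16
  abs_cubicResonance_mul_le : |cubicResonance x₁ x₂ x₃| *
      ((x₁ + x₂ + x₃) ^ 2 + x₁ ^ 2 + x₂ ^ 2 + x₃ ^ 2) ≤ |x₁ + x₂ + x₃| * |x₄| ^ 4 / 5

section FrequencyBounds

variable {x₁ x₂ x₃ x₄ : ℝ}

theorem sum_sq_le_of_abs_le (h₁ : |x₁| ≤ |x₃|) (h₂ : |x₂| ≤ |x₃|) :
    (x₁ + x₂ + x₃) ^ 2 + x₁ ^ 2 + x₂ ^ 2 + x₃ ^ 2 ≤ 12 * |x₃| ^ 2 := by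
  have hsum : |x₁ + x₂ + x₃| ≤ 3 * |x₃| := (abs_add_three _ _ _).trans (by linarith)
  rw [← sq_abs (x₁ + x₂ + x₃), ← sq_abs x₁, ← sq_abs x₂, ← sq_abs x₃]
  nlinarith [abs_nonneg x₁, abs_nonneg x₂, abs_nonneg (x₁ + x₂ + x₃)]

theorem abs_cubicResonance_le_of_abs_le (h₁ : |x₁| ≤ |x₃|) (h₂ : |x₂| ≤ |x₃|) :
    |cubicResonance x₁ x₂ x₃| ≤ 8 * |x₃| ^ 3 := by
  have h₁₂ : |x₁ + x₂| ≤ 2 * |x₃| := (abs_add_le _ _).trans (by linarith)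
  have h₂₃ : |x₂ + x₃| ≤ 2 * |x₃| := (abs_add_le _ _).trans (by linarith)
  have h₁₃ : |x₁ + x₃| ≤ 2 * |x₃| := (abs_add_le _ _).trans (by linarith)
  calc |cubicResonance x₁ x₂ x₃| = |x₁ + x₂| * |x₂ + x₃| * |x₁ + x₃| := by
        rw [cubicResonance, abs_mul, abs_mul]
    _ ≤ (2 * |x₃|) * (2 * |x₃|) * (2 * |x₃|) := by gcongr
    _ = 8 * |x₃| ^ 3 := by ring

theorem FrequencyBounds.of_lacunary (h₄₃ : 4 * |x₃| < |x₄|) (h₃₂ : 16 * |x₂| < |x₃|)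
    (h₂₁ : |x₁| ≤ |x₂|) : FrequencyBounds x₁ x₂ x₃ x₄ := by
  have h₁₂ : |x₁ + x₂| ≤ |x₃| / 8 := (abs_add_le _ _).trans (by linarith)
  have hsum_le : |x₁ + x₂ + x₃| ≤ 9 / 8 * |x₃| := (abs_add_le _ _).trans (by linarith)
  have hsum_ge : 7 / 8 * |x₃| ≤ |x₁ + x₂ + x₃| := by
    have := abs_sub (x₁ + x₂ + x₃) (x₁ + x₂)
    rw [add_sub_cancel_left] at this
    linarith
  have hσ : |cubicResonance x₁ x₂ x₃| ≤ |x₃| ^ 3 / 2 := by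
    have h₂₃ : |x₂ + x₃| ≤ 2 * |x₃| := (abs_add_le _ _).trans (by linarith)
    have h₁₃ : |x₁ + x₃| ≤ 2 * |x₃| := (abs_add_le _ _).trans (by linarith)
    calc |cubicResonance x₁ x₂ x₃| = |x₁ + x₂| * |x₂ + x₃| * |x₁ + x₃| := by
          rw [cubicResonance, abs_mul, abs_mul]
      _ ≤ (|x₃| / 8) * (2 * |x₃|) * (2 * |x₃|) := by gcongr
      _ = |x₃| ^ 3 / 2 := by ring
  have hT := sum_sq_le_of_abs_le (x₁ := x₁) (x₂ := x₂) (x₃ := x₃) (by linarith) (by linarith)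
  have hx₃ : |x₃| ≤ |x₄| / 4 := by linarith
  refine ⟨by linarith, hσ.trans ?_, ?_⟩
  · calc |x₃| ^ 3 / 2 ≤ (|x₄| / 4) ^ 3 / 2 := by gcongr
      _ = |x₄| ^ 3 / 128 := by ring
      _ ≤ |x₄| ^ 3 / 16 := by gcongr; norm_num
  · calc _ ≤ |x₃| ^ 3 / 2 * (12 * |x₃| ^ 2) := by gcongr
      _ = 6 * |x₃| * |x₃| ^ 4 := by ring
      _ ≤ 6 * (8 / 7 * |x₁ + x₂ + x₃|) * (|x₄| / 4) ^ 4 := by gcongr; linarith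
      _ = 3 / 112 * (|x₁ + x₂ + x₃| * |x₄| ^ 4) := by ring
      _ ≤ 1 / 5 * (|x₁ + x₂ + x₃| * |x₄| ^ 4) := by gcongr ?_ * _; norm_num
      _ = |x₁ + x₂ + x₃| * |x₄| ^ 4 / 5 := by ring

theorem FrequencyBounds.of_lt_rpow (h₄₃ : 64 * |x₃| < |x₄| ^ ((4 : ℝ) / 5))
    (h₃₂ : |x₂| ≤ |x₃|) (h₂₁ : |x₁| ≤ |x₂|) (hx₄ : 1 ≤ |x₄|) (hsum : 1 ≤ |x₁ + x₂ + x₃|) :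
    FrequencyBounds x₁ x₂ x₃ x₄ := by
  have hx₃ : |x₃| ≤ |x₄| / 64 := by
    have : |x₄| ^ ((4 : ℝ) / 5) ≤ |x₄| :=
      Real.rpow_le_self_of_one_le hx₄ (by norm_num)
    linarith
  have hx₃_pow : (64 * |x₃|) ^ 5 ≤ |x₄| ^ 4 := by
    calc (64 * |x₃|) ^ 5 ≤ (|x₄| ^ ((4 : ℝ) / 5)) ^ 5 := by gcongr
      _ = |x₄| ^ 4 := by rw [← Real.rpow_mul_natCast (abs_nonneg _)]; norm_num
  have hσ := abs_cubicResonance_le_of_abs_le (x₁ := x₁) (x₂ := x₂) (x₃ := x₃) (by linarith) h₃₂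
  have hT := sum_sq_le_of_abs_le (x₁ := x₁) (x₂ := x₂) (x₃ := x₃) (by linarith) h₃₂
  refine ⟨(abs_add_three _ _ _).trans (by linarith), hσ.trans ?_, ?_⟩
  · calc 8 * |x₃| ^ 3 ≤ 8 * (|x₄| / 64) ^ 3 := by gcongr
      _ = |x₄| ^ 3 / 32768 := by ring
      _ ≤ |x₄| ^ 3 / 16 := by gcongr; norm_num
  · calc _ ≤ 8 * |x₃| ^ 3 * (12 * |x₃| ^ 2) := by gcongr
      _ = 96 / 64 ^ 5 * (64 * |x₃|) ^ 5 := by ring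
      _ ≤ 96 / 64 ^ 5 * |x₄| ^ 4 := by gcongr
      _ ≤ |x₄| ^ 4 / 5 := by linarith [pow_nonneg (abs_nonneg x₄) 4]
      _ ≤ |x₁ + x₂ + x₃| * |x₄| ^ 4 / 5 := by
        rw [mul_div_assoc]; exact le_mul_of_one_le_left (by positivity) hsum

theorem FrequencyBounds.of_lt_abs_sum (h₄₃ : 64 * |x₃| < |x₄|) (h₃₂ : |x₂| ≤ |x₃|)
    (h₂₁ : |x₁| ≤ |x₂|) (hsum : 16 * |x₁| < |x₁ + x₂ + x₃|) : FrequencyBounds x₁ x₂ x₃ x₄ := by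
  have hsum_le : |x₁ + x₂ + x₃| ≤ 3 * |x₃| := (abs_add_three _ _ _).trans (by linarith)
  have h₂₃ : |x₂ + x₃| ≤ 17 / 16 * |x₁ + x₂ + x₃| := by
    rw [show x₂ + x₃ = x₁ + x₂ + x₃ - x₁ by ring]
    exact (abs_sub _ _).trans (by linarith)
  have h₁₂ : |x₁ + x₂| ≤ 2 * |x₃| := (abs_add_le _ _).trans (by linarith)
  have h₁₃ : |x₁ + x₃| ≤ 2 * |x₃| := (abs_add_le _ _).trans (by linarith)
  have hσ : |cubicResonance x₁ x₂ x₃| ≤ 17 / 4 * |x₁ + x₂ + x₃| * |x₃| ^ 2 := by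
    calc |cubicResonance x₁ x₂ x₃| = |x₁ + x₂| * |x₂ + x₃| * |x₁ + x₃| := by
          rw [cubicResonance, abs_mul, abs_mul]
      _ ≤ (2 * |x₃|) * (17 / 16 * |x₁ + x₂ + x₃|) * (2 * |x₃|) := by gcongr
      _ = 17 / 4 * |x₁ + x₂ + x₃| * |x₃| ^ 2 := by ring
  have hT := sum_sq_le_of_abs_le (x₁ := x₁) (x₂ := x₂) (x₃ := x₃) (by linarith) h₃₂
  have hx₃ : |x₃| ≤ |x₄| / 64 := by linarith
  refine ⟨by linarith [abs_nonneg x₄], hσ.trans ?_, ?_⟩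
  · calc 17 / 4 * |x₁ + x₂ + x₃| * |x₃| ^ 2 ≤ 17 / 4 * (3 * |x₃|) * |x₃| ^ 2 := by gcongr
      _ = 51 / 4 * |x₃| ^ 3 := by ring
      _ ≤ 51 / 4 * (|x₄| / 64) ^ 3 := by gcongr
      _ = 51 / 4 / 64 ^ 3 * |x₄| ^ 3 := by ring
      _ ≤ |x₄| ^ 3 / 16 := by linarith [pow_nonneg (abs_nonneg x₄) 3]
  · calc _ ≤ 17 / 4 * |x₁ + x₂ + x₃| * |x₃| ^ 2 * (12 * |x₃| ^ 2) := by gcongr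
      _ = 51 * |x₁ + x₂ + x₃| * |x₃| ^ 4 := by ring
      _ ≤ 51 * |x₁ + x₂ + x₃| * (|x₄| / 64) ^ 4 := by gcongr
      _ = 51 / 64 ^ 4 * (|x₁ + x₂ + x₃| * |x₄| ^ 4) := by ring
      _ ≤ |x₁ + x₂ + x₃| * |x₄| ^ 4 / 5 := by
        linarith [mul_nonneg (abs_nonneg (x₁ + x₂ + x₃)) (pow_nonneg (abs_nonneg x₄) 4)]

end FrequencyBounds

theorem FrequencyBounds.of_cases {k₁ k₂ k₃ k₄ : ℤ} (hk₄ : 1 ≤ |(k₄ : ℝ)|)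
    (hsum : 1 ≤ |(k₁ + k₂ + k₃ : ℝ)|)
    (h : (|k₄| > 4 * |k₃| ∧ |k₃| > 16 * |k₂| ∧ |k₂| ≥ |k₁|) ∨
      (((|k₄| : ℤ) : ℝ) ^ ((4 : ℝ) / 5) > 64 * ((|k₃| : ℤ) : ℝ) ∧ |k₃| ≥ |k₂| ∧ |k₂| ≥ |k₁|) ∨
      (|k₄| > 64 * |k₃| ∧ |k₃| ≥ |k₂| ∧ |k₂| ≥ |k₁| ∧ |k₁ + k₂ + k₃| > 16 * |k₁|)) :
    FrequencyBounds k₁ k₂ k₃ k₄ := by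
  rcases h with ⟨h₄₃, h₃₂, h₂₁⟩ | ⟨h₄₃, h₃₂, h₂₁⟩ | ⟨h₄₃, h₃₂, h₂₁, h₁⟩
  · exact .of_lacunary (by exact_mod_cast h₄₃) (by exact_mod_cast h₃₂) (by exact_mod_cast h₂₁)
  · push_cast at h₄₃
    exact .of_lt_rpow h₄₃ (by exact_mod_cast h₃₂) (by exact_mod_cast h₂₁) hk₄ hsum
  · exact .of_lt_abs_sum (by exact_mod_cast h₄₃) (by exact_mod_cast h₃₂) (by exact_mod_cast h₂₁)
      (by exact_mod_cast h₁)

-- `p(m + n) - p(m) - p(n)` for real arguments, factored.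
def phase2 (a m n : ℝ) : ℝ := m * n * (m + n) * (3 * a - 5 * (m ^ 2 + m * n + n ^ 2))

-- `p(x₁ + x₂ + x₃) - p(x₁) - p(x₂) - p(x₃)` for real arguments, factored.
noncomputable def phase3 (a x₁ x₂ x₃ : ℝ) : ℝ :=
  cubicResonance x₁ x₂ x₃ * (3 * a - 5 / 2 * ((x₁ + x₂ + x₃) ^ 2 + x₁ ^ 2 + x₂ ^ 2 + x₃ ^ 2))

theorem Phi4_eq_phase2_add_phase3 (a : ℝ) (k₁ k₂ k₃ k₄ : ℤ) :
    Phi4 a k₁ k₂ k₃ k₄ = phase2 a (k₁ + k₂ + k₃) k₄ + phase3 a k₁ k₂ k₃ := by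
  simp only [Phi4, p, phase2, phase3, cubicResonance]
  push_cast
  ring

theorem Phi4_sub_Phi4 (a b : ℝ) (k₁ k₂ k₃ k₄ : ℤ) :
    Phi4 a k₁ k₂ k₃ k₄ - Phi4 b k₁ k₂ k₃ k₄ =
      3 * (a - b) * ((k₁ + k₂ + k₃) * k₄ * (k₁ + k₂ + k₃ + k₄) + cubicResonance k₁ k₂ k₃) := by
  simp only [Phi4_eq_phase2_add_phase3, phase2, phase3]
  ring

theorem abs_phase2_ge {a m n : ℝ} (hm : |m| ≤ 9 / 32 * |n|) (hn : 1 ≤ |n|) (ha : |a| ≤ |n| / 16) :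
    2 * (|m| * |n| ^ 4) ≤ |phase2 a m n| := by
  have hmn : 23 / 32 * |n| ≤ |m + n| := by
    have := abs_sub (m + n) m
    rw [add_sub_cancel_left] at this
    linarith
  have hq : 3 / 4 * n ^ 2 ≤ m ^ 2 + m * n + n ^ 2 := by nlinarith [sq_nonneg (m + n / 2)]
  have ha' : 3 * |a| ≤ 3 / 16 * n ^ 2 := by
    rw [← sq_abs n]; nlinarith
  have hfactor : 57 / 16 * |n| ^ 2 ≤ |3 * a - 5 * (m ^ 2 + m * n + n ^ 2)| := by
    rw [abs_sub_comm, sq_abs]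
    refine le_trans ?_ (le_abs_self _)
    linarith [le_abs_self a]
  calc 2 * (|m| * |n| ^ 4) ≤ 1311 / 512 * (|m| * |n| ^ 4) := by
        linarith [mul_nonneg (abs_nonneg m) (pow_nonneg (abs_nonneg n) 4)]
    _ = |m| * |n| * (23 / 32 * |n|) * (57 / 16 * |n| ^ 2) := by ring
    _ ≤ |m| * |n| * |m + n| * |3 * a - 5 * (m ^ 2 + m * n + n ^ 2)| := by gcongr
    _ = |phase2 a m n| := by simp only [phase2, abs_mul]

theorem abs_phase3_le {a x₁ x₂ x₃ x₄ : ℝ} (hF : FrequencyBounds x₁ x₂ x₃ x₄)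
    (ha : |a| ≤ |x₄| / 16) :
    |phase3 a x₁ x₂ x₃| ≤ |x₁ + x₂ + x₃| * |x₄| ^ 4 / 2 + |x₄| ^ 4 / 64 := by
  have hT : 0 ≤ (x₁ + x₂ + x₃) ^ 2 + x₁ ^ 2 + x₂ ^ 2 + x₃ ^ 2 := by positivity
  calc |phase3 a x₁ x₂ x₃| ≤ |cubicResonance x₁ x₂ x₃| *
        (3 * |a| + 5 / 2 * ((x₁ + x₂ + x₃) ^ 2 + x₁ ^ 2 + x₂ ^ 2 + x₃ ^ 2)) := by
        rw [phase3, abs_mul]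
        gcongr
        refine (abs_sub _ _).trans_eq ?_
        rw [abs_mul, abs_mul, abs_of_nonneg hT]
        norm_num
    _ = 3 * |a| * |cubicResonance x₁ x₂ x₃| + 5 / 2 * (|cubicResonance x₁ x₂ x₃| *
          ((x₁ + x₂ + x₃) ^ 2 + x₁ ^ 2 + x₂ ^ 2 + x₃ ^ 2)) := by ring
    _ ≤ 3 * (|x₄| / 16) * (|x₄| ^ 3 / 16) + 5 / 2 * (|x₁ + x₂ + x₃| * |x₄| ^ 4 / 5) := by
      gcongr
      exacts [hF.abs_cubicResonance_le, hF.abs_cubicResonance_mul_le]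
    _ ≤ _ := by linarith [pow_nonneg (abs_nonneg x₄) 4]

theorem abs_Phi4_ge {a : ℝ} {k₁ k₂ k₃ k₄ : ℤ} (hF : FrequencyBounds k₁ k₂ k₃ k₄)
    (hsum : 1 ≤ |(k₁ + k₂ + k₃ : ℝ)|) (hk₄ : 1 ≤ |(k₄ : ℝ)|) (ha : |a| ≤ |(k₄ : ℝ)| / 16) :
    |(k₁ + k₂ + k₃ : ℝ)| * |(k₄ : ℝ)| ^ 4 ≤ |Phi4 a k₁ k₂ k₃ k₄| := by
  have h₂ := abs_phase2_ge hF.abs_sum_le hk₄ ha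
  have h₃ := abs_phase3_le hF ha
  have h₄ : |(k₄ : ℝ)| ^ 4 ≤ |(k₁ + k₂ + k₃ : ℝ)| * |(k₄ : ℝ)| ^ 4 :=
    le_mul_of_one_le_left (by positivity) hsum
  rw [Phi4_eq_phase2_add_phase3]
  have := abs_sub (phase2 a (k₁ + k₂ + k₃) k₄ + phase3 a k₁ k₂ k₃) (phase3 a k₁ k₂ k₃)
  rw [add_sub_cancel_right] at this
  linarith [pow_nonneg (abs_nonneg (k₄ : ℝ)) 4]

theorem abs_Phi4_sub_Phi4_le {a b : ℝ} {k₁ k₂ k₃ k₄ : ℤ} (hF : FrequencyBounds k₁ k₂ k₃ k₄) :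
    |Phi4 a k₁ k₂ k₃ k₄ - Phi4 b k₁ k₂ k₃ k₄| ≤ 2 * |a - b| * |(k₄ : ℝ)| ^ 3 := by
  set m : ℝ := k₁ + k₂ + k₃
  have hm := hF.abs_sum_le
  have hmn : |m + k₄| ≤ 41 / 32 * |(k₄ : ℝ)| := (abs_add_le _ _).trans (by linarith)
  have hcube : |m * k₄ * (m + k₄) + cubicResonance k₁ k₂ k₃| ≤ 2 / 3 * |(k₄ : ℝ)| ^ 3 := by
    calc _ ≤ |m| * |(k₄ : ℝ)| * |m + k₄| + |cubicResonance k₁ k₂ k₃| := by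
          rw [← abs_mul, ← abs_mul]; exact abs_add_le _ _
      _ ≤ 9 / 32 * |(k₄ : ℝ)| * |(k₄ : ℝ)| * (41 / 32 * |(k₄ : ℝ)|) + |(k₄ : ℝ)| ^ 3 / 16 := by
          gcongr; exact hF.abs_cubicResonance_le
      _ ≤ 2 / 3 * |(k₄ : ℝ)| ^ 3 := by linarith [pow_nonneg (abs_nonneg (k₄ : ℝ)) 3]
  rw [Phi4_sub_Phi4, abs_mul, abs_mul, abs_of_pos three_pos]
  calc 3 * |a - b| * _ ≤ 3 * |a - b| * (2 / 3 * |(k₄ : ℝ)| ^ 3) := by gcongr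
    _ = 2 * |a - b| * |(k₄ : ℝ)| ^ 3 := by ring

theorem abs_one_div_sub_one_div_le {A B L : ℝ} (hL : 0 < L) (hA : L ≤ |A|) (hB : L ≤ |B|) :
    |1 / A - 1 / B| ≤ |A - B| / L * min (1 / |A|) (1 / |B|) := by
  have hA₀ : 0 < |A| := hL.trans_le hA
  have hB₀ : 0 < |B| := hL.trans_le hB
  have heq : |1 / A - 1 / B| = |A - B| / (|A| * |B|) := by
    rw [div_sub_div _ _ (abs_pos.mp hA₀) (abs_pos.mp hB₀), abs_div, abs_mul, ← abs_neg]
    ring_nf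
  rw [heq, mul_min_of_nonneg _ _ (by positivity)]
  refine le_min ?_ ?_
  · calc |A - B| / (|A| * |B|) = |A - B| / |B| * (1 / |A|) := by field_simp
      _ ≤ |A - B| / L * (1 / |A|) := by gcongr
  · calc |A - B| / (|A| * |B|) = |A - B| / |A| * (1 / |B|) := by field_simp
      _ ≤ |A - B| / L * (1 / |B|) := by gcongr

/-- Nonvanishing and difference estimate for reciprocals of quartic phases under the
strengthened frequency assumptions (i), (ii) or (iii). -/
theorem phi4_reciprocal_difference :
    ∃ C : ℝ, 0 < C ∧ ∀ (a b : ℝ) (k₁ k₂ k₃ k₄ : ℤ),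
      ((|k₄| : ℤ) : ℝ) > 16 * max 1 (max |a| |b|) →
      k₁ + k₂ + k₃ ≠ 0 →
      ((|k₄| > 4 * |k₃| ∧ |k₃| > 16 * |k₂| ∧ |k₂| ≥ |k₁|) ∨
       (((|k₄| : ℤ) : ℝ) ^ ((4 : ℝ) / 5) > 64 * ((|k₃| : ℤ) : ℝ) ∧ |k₃| ≥ |k₂| ∧ |k₂| ≥ |k₁|) ∨
       (|k₄| > 64 * |k₃| ∧ |k₃| ≥ |k₂| ∧ |k₂| ≥ |k₁| ∧ |k₁ + k₂ + k₃| > 16 * |k₁|)) →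
      Phi4 a k₁ k₂ k₃ k₄ ≠ 0 ∧ Phi4 b k₁ k₂ k₃ k₄ ≠ 0 ∧
      |1 / Phi4 a k₁ k₂ k₃ k₄ - 1 / Phi4 b k₁ k₂ k₃ k₄| ≤
        C * (|a - b| / (((|k₁ + k₂ + k₃| : ℤ) : ℝ) * ((|k₄| : ℤ) : ℝ))) *
          min (1 / |Phi4 a k₁ k₂ k₃ k₄|) (1 / |Phi4 b k₁ k₂ k₃ k₄|) := by
  refine ⟨2, two_pos, fun a b k₁ k₂ k₃ k₄ hk₄ hsum hcases => ?_⟩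
  push_cast at hk₄ ⊢
  have hk₄' : 1 ≤ |(k₄ : ℝ)| := by linarith [le_max_left 1 (max |a| |b|)]
  have hab := le_max_right 1 (max |a| |b|)
  have ha : |a| ≤ |(k₄ : ℝ)| / 16 := by linarith [le_max_left |a| |b|]
  have hb : |b| ≤ |(k₄ : ℝ)| / 16 := by linarith [le_max_right |a| |b|]
  have hsum' : 1 ≤ |(k₁ + k₂ + k₃ : ℝ)| := by exact_mod_cast Int.one_le_abs hsum
  have hF := FrequencyBounds.of_cases hk₄' hsum' hcases
  have hL : 0 < |(k₁ + k₂ + k₃ : ℝ)| * |(k₄ : ℝ)| ^ 4 := by positivity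
  have hA := abs_Phi4_ge hF hsum' hk₄' ha
  have hB := abs_Phi4_ge hF hsum' hk₄' hb
  refine ⟨abs_pos.mp (hL.trans_le hA), abs_pos.mp (hL.trans_le hB), ?_⟩
  refine (abs_one_div_sub_one_div_le hL hA hB).trans ?_
  gcongr
  calc _ ≤ 2 * |a - b| * |(k₄ : ℝ)| ^ 3 / (|(k₁ + k₂ + k₃ : ℝ)| * |(k₄ : ℝ)| ^ 4) := by
        gcongr; exact abs_Phi4_sub_Phi4_le hF
    _ = _ := by field_simp
end

section
/- There exists a constant c > 0 such that for every real number a and all integers k₁, k₂, k₃, k₄ satisfying |k₄| > 8·max{1, |a|}, 4·|k₃| ≥ |k₄| ≥ |k₃|, and |k₃+k₄| > 16·|k₂| ≥ 16·|k₁|, one has |Φ_a^(4)(k₁,k₂,k₃,k₄)| ≥ c · |k₁+k₂+k₃+k₄| · |k₄|⁴. -/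
set_option maxHeartbeats 4000000

private lemma key (a x1 x2 x3 x4 : ℝ)
    (ha : 8 * |a| < |x4|) (h8 : (8:ℝ) < |x4|)
    (h34 : |x4| ≤ 4 * |x3|) (h43 : |x3| ≤ |x4|)
    (h2 : 16 * |x2| < |x3 + x4|) (h12 : |x1| ≤ |x2|) :
    1/20 * |x1 + x2 + x3 + x4| * |x4| ^ 4 ≤
      |(-(x1 + x2 + x3 + x4) ^ 5 + a * (x1 + x2 + x3 + x4) ^ 3)
        - ((-x1 ^ 5 + a * x1 ^ 3) + (-x2 ^ 5 + a * x2 ^ 3)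
          + (-x3 ^ 5 + a * x3 ^ 3) + (-x4 ^ 5 + a * x4 ^ 3))| := by
  have hr4 : (0:ℝ) < |x4| := by linarith
  have hrn0 : (0:ℝ) ≤ |x3 + x4| := abs_nonneg _
  have hrm : |x1 + x2| ≤ |x3 + x4| / 8 := by
    have h := abs_add_le x1 x2; linarith
  have hrs : |x1 + x2 + x3 + x4| ≤ 9/8 * |x3 + x4| := by
    have h1 : |x1 + x2 + x3 + x4| ≤ |x1 + x2| + |x3 + x4| := by
      calc |x1 + x2 + x3 + x4| = |(x1 + x2) + (x3 + x4)| := by congr 1; ring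
        _ ≤ |x1 + x2| + |x3 + x4| := abs_add_le _ _
    linarith
  have hrn2 : |x3 + x4| ≤ 2 * |x4| := by
    have h := abs_add_le x3 x4; linarith
  have ha64 : 3 * |a| ≤ 3/64 * |x4| ^ 2 := by
    nlinarith [mul_nonneg hr4.le (show (0:ℝ) ≤ |x4| - 8 by linarith), abs_nonneg a]
  have t2 : |x2| ≤ |x3 + x4| / 16 := by linarith
  have t1 : |x1| ≤ |x3 + x4| / 16 := by linarith
  have hsr : |x1 + x2 + x3 + x4| * |x4| ^ 4 ≤ 9/8 * (|x3 + x4| * |x4| ^ 4) := by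
    have h := mul_le_mul_of_nonneg_right hrs (show (0:ℝ) ≤ |x4| ^ 4 by positivity)
    linarith
  have s1 : x1 ^ 2 ≤ |x3 + x4| ^ 2 / 256 := by
    have h := mul_le_mul t1 t1 (abs_nonneg x1) (show (0:ℝ) ≤ |x3 + x4| / 16 by positivity)
    have h2 := sq_abs x1
    linarith only [h, h2]
  have s2 : x2 ^ 2 ≤ |x3 + x4| ^ 2 / 256 := by
    have h := mul_le_mul t2 t2 (abs_nonneg x2) (show (0:ℝ) ≤ |x3 + x4| / 16 by positivity)
    have h2 := sq_abs x2
    linarith only [h, h2]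
  have sm1 : |x1 * x2| ≤ |x3 + x4| ^ 2 / 256 := by
    rw [abs_mul]
    linarith only [mul_le_mul t1 t2 (abs_nonneg x2) (show (0:ℝ) ≤ |x3 + x4| / 16 by positivity)]
  have sm2 : |x2 * (x3 + x4)| ≤ |x3 + x4| ^ 2 / 16 := by
    rw [abs_mul]
    linarith only [mul_le_mul_of_nonneg_right t2 hrn0]
  have sm3 : |(x3 + x4) * x1| ≤ |x3 + x4| ^ 2 / 16 := by
    rw [abs_mul]
    linarith only [mul_le_mul_of_nonneg_left t1 hrn0]
  rcases le_or_gt (x3 * x4) 0 with hsgn | hsgn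
  · -- Case A : x3 and x4 have opposite signs, so |x3+x4| ≤ (3/4)|x4|
    have habs34 : |x3| * |x4| = -(x3 * x4) := by
      rw [← abs_mul, abs_of_nonpos hsgn]
    have hn2 : |x3 + x4| ^ 2 ≤ (3/4 * |x4|) ^ 2 := by
      have e : |x3 + x4| ^ 2 = x3 ^ 2 + 2 * (x3 * x4) + x4 ^ 2 := by rw [sq_abs]; ring
      have e3 : |x3| ^ 2 = x3 ^ 2 := sq_abs x3
      have e4 : |x4| ^ 2 = x4 ^ 2 := sq_abs x4
      linarith only [mul_nonneg (show (0:ℝ) ≤ |x3| - |x4|/4 by linarith)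
        (show (0:ℝ) ≤ 7/4 * |x4| - |x3| by linarith), e, e3, e4, habs34, h34, h43]
    have hn34 : |x3 + x4| ≤ 3/4 * |x4| := by
      nlinarith [hn2, hrn0, hr4.le]
    have hid : (-(x1 + x2 + x3 + x4) ^ 5 + a * (x1 + x2 + x3 + x4) ^ 3)
        - ((-x1 ^ 5 + a * x1 ^ 3) + (-x2 ^ 5 + a * x2 ^ 3)
          + (-x3 ^ 5 + a * x3 ^ 3) + (-x4 ^ 5 + a * x4 ^ 3)) =
        -(((x1 + x2) * (x2 + (x3 + x4)) * ((x3 + x4) + x1) *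
            (5 * (x1^2 + x2^2 + (x3+x4)^2 + x1*x2 + x2*(x3+x4) + (x3+x4)*x1) - 3*a))
          + (x3 * x4 * (x3 + x4) * (5 * (x3^2 + x3*x4 + x4^2) - 3*a))) := by ring
    rw [hid, abs_neg]
    set U := (x1 + x2) * (x2 + (x3 + x4)) * ((x3 + x4) + x1) *
        (5 * (x1^2 + x2^2 + (x3+x4)^2 + x1*x2 + x2*(x3+x4) + (x3+x4)*x1) - 3*a) with hUdef
    set V := x3 * x4 * (x3 + x4) * (5 * (x3^2 + x3*x4 + x4^2) - 3*a) with hVdef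
    have htri : |V| - |U| ≤ |U + V| := by
      have h1 : |V| ≤ |U + V| + |U| := by
        calc |V| = |(U + V) + -U| := by congr 1; ring
          _ ≤ |U + V| + |-U| := abs_add_le _ _
          _ = |U + V| + |U| := by rw [abs_neg]
      linarith
    have hVfac : |V| = |x3| * |x4| * |x3 + x4| * |5 * (x3^2 + x3*x4 + x4^2) - 3*a| := by
      rw [hVdef, abs_mul, abs_mul, abs_mul]
    have hq34 : 237/64 * |x4|^2 ≤ |5 * (x3^2 + x3*x4 + x4^2) - 3*a| := by
      have h1 : 237/64 * |x4|^2 ≤ 5 * (x3^2 + x3*x4 + x4^2) - 3*a := by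
        linarith only [sq_nonneg (x3 + x4/2), sq_abs x4, le_abs_self a, ha64]
      exact h1.trans (le_abs_self _)
    have hV : 237/256 * (|x3 + x4| * |x4|^4) ≤ |V| := by
      rw [hVfac]
      calc 237/256 * (|x3 + x4| * |x4|^4)
          = |x4|/4 * |x4| * |x3 + x4| * (237/64 * |x4|^2) := by ring
        _ ≤ |x3| * |x4| * |x3 + x4| * |5 * (x3^2 + x3*x4 + x4^2) - 3*a| := by
            gcongr
            all_goals first | exact hq34 | linarith
    have hUfac : |U| = |x1 + x2| * |x2 + (x3 + x4)| * |(x3 + x4) + x1| *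
        |5 * (x1^2 + x2^2 + (x3+x4)^2 + x1*x2 + x2*(x3+x4) + (x3+x4)*x1) - 3*a| := by
      rw [hUdef, abs_mul, abs_mul, abs_mul]
    have hb2 : |x2 + (x3 + x4)| ≤ 17/16 * |x3 + x4| := by
      have h := abs_add_le x2 (x3 + x4); linarith
    have hb1 : |(x3 + x4) + x1| ≤ 17/16 * |x3 + x4| := by
      have h := abs_add_le (x3 + x4) x1; linarith
    have hq1 : |5 * (x1^2 + x2^2 + (x3+x4)^2 + x1*x2 + x2*(x3+x4) + (x3+x4)*x1) - 3*a| ≤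
        6 * |x3 + x4|^2 + 3/64 * |x4|^2 := by
      apply abs_le.mpr
      constructor <;>
        linarith only [s1, s2, sm1, sm2, sm3, ha64, sq_abs (x3 + x4),
          sq_nonneg x1, sq_nonneg x2, sq_nonneg (x3 + x4),
          le_abs_self (x1*x2), neg_abs_le (x1*x2),
          le_abs_self (x2*(x3+x4)), neg_abs_le (x2*(x3+x4)),
          le_abs_self ((x3+x4)*x1), neg_abs_le ((x3+x4)*x1),
          le_abs_self a, neg_abs_le a]
    have hU : |U| ≤ |x3 + x4|/8 * (17/16 * |x3 + x4|) * (17/16 * |x3 + x4|) *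
        (6 * |x3 + x4|^2 + 3/64 * |x4|^2) := by
      rw [hUfac]
      gcongr
      all_goals first | exact hrm | exact hb2 | exact hb1 | exact hq1
    have e2 : |x3 + x4|^2 ≤ 9/16 * |x4|^2 := by
      linarith only [mul_le_mul hn34 hn34 hrn0 (show (0:ℝ) ≤ 3/4 * |x4| by positivity)]
    have e4 : |x3 + x4|^4 ≤ 81/256 * |x4|^4 := by
      linarith only [mul_le_mul e2 e2 (sq_nonneg (|x3 + x4|))
        (show (0:ℝ) ≤ 9/16 * |x4|^2 by positivity)]
    have e5 : |x3 + x4|^5 ≤ 81/256 * (|x3 + x4| * |x4|^4) := by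
      linarith only [mul_le_mul_of_nonneg_left e4 hrn0]
    have e32 : |x3 + x4|^3 * |x4|^2 ≤ 9/16 * (|x3 + x4| * |x4|^4) := by
      linarith only [mul_le_mul_of_nonneg_left (mul_le_mul_of_nonneg_right e2 (sq_nonneg (|x4|))) hrn0]
    have hT : (0:ℝ) ≤ |x3 + x4| * |x4|^4 :=
      mul_nonneg hrn0 (by positivity)
    have hU2 : |U| ≤ 867/1024 * |x3 + x4|^5 + 867/131072 * (|x3 + x4|^3 * |x4|^2) :=
      hU.trans (le_of_eq (by ring))
    have hmain : 1/20 * |x1 + x2 + x3 + x4| * |x4|^4 + |U| ≤ |V| := by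
      linarith only [hsr, hU2, e5, e32, hV, hT]
    linarith
  · -- Case B : x3 and x4 have the same sign
    have hrn3 : |x3 + x4| ≤ |x3| + |x4| := abs_add_le x3 x4
    have hm3 : 3/32 * |x4| ≤ |(x1 + x2) + x3| := by
      have h1 : |x3| ≤ |(x1 + x2) + x3| + |x1 + x2| := by
        calc |x3| = |((x1 + x2) + x3) + -(x1 + x2)| := by congr 1; ring
          _ ≤ |(x1 + x2) + x3| + |-(x1 + x2)| := abs_add_le _ _
          _ = |(x1 + x2) + x3| + |x1 + x2| := by rw [abs_neg]
      linarith
    have hm4 : 3/4 * |x4| ≤ |x4 + (x1 + x2)| := by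
      have h1 : |x4| ≤ |x4 + (x1 + x2)| + |x1 + x2| := by
        calc |x4| = |(x4 + (x1 + x2)) + -(x1 + x2)| := by congr 1; ring
          _ ≤ |x4 + (x1 + x2)| + |-(x1 + x2)| := abs_add_le _ _
          _ = |x4 + (x1 + x2)| + |x1 + x2| := by rw [abs_neg]
      linarith
    have hid : (-(x1 + x2 + x3 + x4) ^ 5 + a * (x1 + x2 + x3 + x4) ^ 3)
        - ((-x1 ^ 5 + a * x1 ^ 3) + (-x2 ^ 5 + a * x2 ^ 3)
          + (-x3 ^ 5 + a * x3 ^ 3) + (-x4 ^ 5 + a * x4 ^ 3)) =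
        -((((x1 + x2) + x3) * (x3 + x4) * (x4 + (x1 + x2)) *
            (5 * ((x1+x2)^2 + x3^2 + x4^2 + (x1+x2)*x3 + x3*x4 + x4*(x1+x2)) - 3*a))
          + (x1 * x2 * (x1 + x2) * (5 * (x1^2 + x1*x2 + x2^2) - 3*a))) := by ring
    rw [hid, abs_neg]
    set U := ((x1 + x2) + x3) * (x3 + x4) * (x4 + (x1 + x2)) *
        (5 * ((x1+x2)^2 + x3^2 + x4^2 + (x1+x2)*x3 + x3*x4 + x4*(x1+x2)) - 3*a) with hUdef
    set W := x1 * x2 * (x1 + x2) * (5 * (x1^2 + x1*x2 + x2^2) - 3*a) with hWdef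
    have htri : |U| - |W| ≤ |U + W| := by
      have h1 : |U| ≤ |U + W| + |W| := by
        calc |U| = |(U + W) + -W| := by congr 1; ring
          _ ≤ |U + W| + |-W| := abs_add_le _ _
          _ = |U + W| + |W| := by rw [abs_neg]
      linarith
    have hq' : 87/64 * |x4|^2 ≤
        |5 * ((x1+x2)^2 + x3^2 + x4^2 + (x1+x2)*x3 + x3*x4 + x4*(x1+x2)) - 3*a| := by
      have h1 : 87/64 * |x4|^2 ≤
          5 * ((x1+x2)^2 + x3^2 + x4^2 + (x1+x2)*x3 + x3*x4 + x4*(x1+x2)) - 3*a := by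
        linarith only [sq_nonneg ((x1 + x2) + x3), sq_nonneg (x3 + x4),
          mul_le_mul hm4 hm4 (show (0:ℝ) ≤ 3/4 * |x4| by positivity) (abs_nonneg _),
          sq_abs (x4 + (x1 + x2)), sq_abs x4, le_abs_self a, ha64]
      exact h1.trans (le_abs_self _)
    have hUfac : |U| = |(x1 + x2) + x3| * |x3 + x4| * |x4 + (x1 + x2)| *
        |5 * ((x1+x2)^2 + x3^2 + x4^2 + (x1+x2)*x3 + x3*x4 + x4*(x1+x2)) - 3*a| := by
      rw [hUdef, abs_mul, abs_mul, abs_mul]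
    have hUlow : 783/8192 * (|x3 + x4| * |x4|^4) ≤ |U| := by
      rw [hUfac]
      calc 783/8192 * (|x3 + x4| * |x4|^4)
          = (3/32 * |x4|) * |x3 + x4| * (3/4 * |x4|) * (87/64 * |x4|^2) := by ring
        _ ≤ |(x1 + x2) + x3| * |x3 + x4| * |x4 + (x1 + x2)| *
            |5 * ((x1+x2)^2 + x3^2 + x4^2 + (x1+x2)*x3 + x3*x4 + x4*(x1+x2)) - 3*a| := by
            gcongr
            all_goals first | exact hm3 | exact hm4 | exact hq'
    have hWfac : |W| = |x1| * |x2| * |x1 + x2| * |5 * (x1^2 + x1*x2 + x2^2) - 3*a| := by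
      rw [hWdef, abs_mul, abs_mul, abs_mul]
    have hq12 : |5 * (x1^2 + x1*x2 + x2^2) - 3*a| ≤ |x3 + x4|^2/16 + 3/64 * |x4|^2 := by
      apply abs_le.mpr
      constructor <;>
        linarith only [s1, s2, sm1, ha64, sq_nonneg x1, sq_nonneg x2,
          le_abs_self (x1*x2), neg_abs_le (x1*x2),
          le_abs_self a, neg_abs_le a]
    have hW : |W| ≤ |x3 + x4|/16 * (|x3 + x4|/16) * (|x3 + x4|/8) *
        (|x3 + x4|^2/16 + 3/64 * |x4|^2) := by
      rw [hWfac]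
      gcongr
      all_goals first | exact t1 | exact t2 | exact hrm | exact hq12
    have f2 : |x3 + x4|^2 ≤ 4 * |x4|^2 := by
      linarith only [mul_le_mul hrn2 hrn2 hrn0 (show (0:ℝ) ≤ 2 * |x4| by positivity)]
    have f4 : |x3 + x4|^4 ≤ 16 * |x4|^4 := by
      linarith only [mul_le_mul f2 f2 (sq_nonneg (|x3 + x4|))
        (show (0:ℝ) ≤ 4 * |x4|^2 by positivity)]
    have f5 : |x3 + x4|^5 ≤ 16 * (|x3 + x4| * |x4|^4) := by
      linarith only [mul_le_mul_of_nonneg_left f4 hrn0]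
    have f32 : |x3 + x4|^3 * |x4|^2 ≤ 4 * (|x3 + x4| * |x4|^4) := by
      linarith only [mul_le_mul_of_nonneg_left (mul_le_mul_of_nonneg_right f2 (sq_nonneg (|x4|))) hrn0]
    have hT : (0:ℝ) ≤ |x3 + x4| * |x4|^4 :=
      mul_nonneg hrn0 (by positivity)
    have hW2 : |W| ≤ 1/32768 * |x3 + x4|^5 + 3/131072 * (|x3 + x4|^3 * |x4|^2) :=
      hW.trans (le_of_eq (by ring))
    have hmain : 1/20 * |x1 + x2 + x3 + x4| * |x4|^4 + |W| ≤ |U| := by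
      linarith only [hsr, hW2, f5, f32, hUlow, hT]
    linarith

/-- Lower bound for the quartic phase when `|k₃| ∼ |k₄|` dominate `|k₁|, |k₂|`. -/
theorem phi4_lower_bound_comparable :
    ∃ C : ℝ, 0 < C ∧ ∀ (a : ℝ) (k₁ k₂ k₃ k₄ : ℤ),
      ((|k₄| : ℤ) : ℝ) > 8 * max 1 |a| →
      4 * |k₃| ≥ |k₄| → |k₄| ≥ |k₃| →
      |k₃ + k₄| > 16 * |k₂| → 16 * |k₂| ≥ 16 * |k₁| →
      |Phi4 a k₁ k₂ k₃ k₄| ≥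
        C * ((|k₁ + k₂ + k₃ + k₄| : ℤ) : ℝ) * ((|k₄| : ℤ) : ℝ) ^ 4 := by
  refine ⟨1/20, by norm_num, ?_⟩
  intro a k₁ k₂ k₃ k₄ h1 h2 h3 h4 h5
  have e4 : ((|k₄| : ℤ) : ℝ) = |(k₄ : ℝ)| := by push_cast; ring
  have H8 : (8:ℝ) < |(k₄ : ℝ)| := by
    have h := le_max_left (1:ℝ) |a|
    rw [e4] at h1; nlinarith
  have Ha : 8 * |a| < |(k₄ : ℝ)| := by
    have h := le_max_right (1:ℝ) |a|
    rw [e4] at h1; nlinarith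
  have H34 : |(k₄ : ℝ)| ≤ 4 * |(k₃ : ℝ)| := by exact_mod_cast h2
  have H43 : |(k₃ : ℝ)| ≤ |(k₄ : ℝ)| := by exact_mod_cast h3
  have H2 : 16 * |(k₂ : ℝ)| < |(k₃ : ℝ) + (k₄ : ℝ)| := by exact_mod_cast h4
  have H12 : |(k₁ : ℝ)| ≤ |(k₂ : ℝ)| := by
    have h : |k₁| ≤ |k₂| := by linarith
    exact_mod_cast h
  rw [ge_iff_le]
  calc 1/20 * ((|k₁ + k₂ + k₃ + k₄| : ℤ) : ℝ) * ((|k₄| : ℤ) : ℝ) ^ 4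
      = 1/20 * |(k₁ : ℝ) + (k₂ : ℝ) + (k₃ : ℝ) + (k₄ : ℝ)| * |(k₄ : ℝ)| ^ 4 := by
        push_cast; ring
    _ ≤ |(-((k₁ : ℝ) + k₂ + k₃ + k₄) ^ 5 + a * ((k₁ : ℝ) + k₂ + k₃ + k₄) ^ 3)
          - ((-(k₁ : ℝ) ^ 5 + a * (k₁ : ℝ) ^ 3) + (-(k₂ : ℝ) ^ 5 + a * (k₂ : ℝ) ^ 3)
            + (-(k₃ : ℝ) ^ 5 + a * (k₃ : ℝ) ^ 3) + (-(k₄ : ℝ) ^ 5 + a * (k₄ : ℝ) ^ 3))| :=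
        key a k₁ k₂ k₃ k₄ Ha H8 H34 H43 H2 H12
    _ = |Phi4 a k₁ k₂ k₃ k₄| := by
        unfold Phi4 p
        congr 1
        push_cast
        ring
end

section
/- There exists a constant C > 0 such that for all real numbers α, β, a and all integers k₁, k₂ with k₁·k₂·(k₁+k₂) ≠ 0 and max{|k₁|,|k₂|} > 4·max{1, |a|}, the quadratic symbol Q^(2)(k₁,k₂) = (β/4)·q₁^(2)(k₁,k₂) + (α − β/2)·q₂^(2)(k₁,k₂) satisfies |Q^(2)(k₁,k₂)| ≤ C·(|α| + |β|) · |Φ_a^(2)(k₁,k₂)| / max{|k₁|,|k₂|}. (Equivalently, the normal-form multiplier Q^(2)/Φ_a^(2) is bounded by a constant multiple of ⟨k_max⟩^{-1} on nonresonant frequencies above the threshold, as in Lemma 6.1(I) for the quadratic multipliers L₁^(2), L₂^(2).) -/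
/-- The quadratic symbol `q₁^(2)` (divided by `i`). -/
noncomputable def q1 (k₁ k₂ : ℤ) : ℝ :=
  -((k₁ : ℝ) + (k₂ : ℝ)) * ((k₁ : ℝ) ^ 2 + (k₂ : ℝ) ^ 2 + ((k₁ : ℝ) + (k₂ : ℝ)) ^ 2)

/-- The quadratic symbol `q₂^(2)` (divided by `i`). -/
noncomputable def q2 (k₁ k₂ : ℤ) : ℝ :=
  -(k₁ : ℝ) * (k₂ : ℝ) * ((k₁ : ℝ) + (k₂ : ℝ))

/-- The quadratic nonlinearity `Q^(2)` is bounded by the phase with a gain of one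
derivative on nonresonant frequencies above the threshold. -/
theorem Q2_bounded_by_phase :
    ∃ C : ℝ, 0 < C ∧ ∀ (α β a : ℝ) (k₁ k₂ : ℤ),
      k₁ * k₂ * (k₁ + k₂) ≠ 0 →
      ((max |k₁| |k₂| : ℤ) : ℝ) > 4 * max 1 |a| →
      |(β / 4) * q1 k₁ k₂ + (α - β / 2) * q2 k₁ k₂| ≤
        C * (|α| + |β|) * |Phi2 a k₁ k₂| / ((max |k₁| |k₂| : ℤ) : ℝ) := by
  refine ⟨1, one_pos, ?_⟩
  intro α β a k₁ k₂ hk hM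
  have hk₁ : k₁ ≠ 0 := by rintro rfl; simp at hk
  have hk₂ : k₂ ≠ 0 := by rintro rfl; simp at hk
  set x : ℝ := (k₁ : ℝ) with hx
  set y : ℝ := (k₂ : ℝ) with hy
  have hMx : ((max |k₁| |k₂| : ℤ) : ℝ) = max |x| |y| := by
    push_cast; rfl
  rw [hMx] at hM ⊢
  set M : ℝ := max |x| |y| with hMdef
  have hx1 : 1 ≤ |x| := by
    have := Int.one_le_abs hk₁
    calc (1:ℝ) ≤ ((|k₁| : ℤ) : ℝ) := by exact_mod_cast this
    _ = |x| := by push_cast; rfl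
  have hy1 : 1 ≤ |y| := by
    have := Int.one_le_abs hk₂
    calc (1:ℝ) ≤ ((|k₂| : ℤ) : ℝ) := by exact_mod_cast this
    _ = |y| := by push_cast; rfl
  clear_value x y
  clear_value M
  have hM4 : 4 ≤ M := by
    have h1 : (1:ℝ) ≤ max 1 |a| := le_max_left _ _
    nlinarith
  have ha : |a| < M / 4 := by
    have h2 : |a| ≤ max 1 |a| := le_max_right _ _
    nlinarith
  have hxM : |x| ≤ M := by rw [hMdef]; exact le_max_left _ _
  have hyM : |y| ≤ M := by rw [hMdef]; exact le_max_right _ _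
  have hMpos : (0:ℝ) < M := by linarith
  -- x² + y² ≥ M²
  have hxy2 : M ^ 2 ≤ x ^ 2 + y ^ 2 := by
    rcases max_cases |x| |y| with ⟨h, _⟩ | ⟨h, _⟩ <;> rw [hMdef, h] <;>
      nlinarith [sq_nonneg x, sq_nonneg y, sq_abs x, sq_abs y]
  -- |xy| ≥ M
  have hxyM : M ≤ |x| * |y| := by
    rcases max_cases |x| |y| with ⟨h, _⟩ | ⟨h, _⟩ <;> rw [hMdef, h] <;> nlinarith
  set P : ℝ := |x * y * (x + y)| with hPdef
  have hP0 : 0 ≤ P := abs_nonneg _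
  -- factorization of the phase
  have hPhi : Phi2 a k₁ k₂ = -(x * y * (x + y)) * (5 * (x ^ 2 + x * y + y ^ 2) - 3 * a) := by
    rw [hx, hy]
    simp only [Phi2, p]
    push_cast
    ring
  have habs : |a| < M / 4 := ha
  have haa := abs_lt.mp habs
  have hD : 2 * M ^ 2 ≤ 5 * (x ^ 2 + x * y + y ^ 2) - 3 * a := by
    nlinarith [sq_nonneg (x + y), hxy2, haa.1, haa.2, hM4, hMpos]
  have hPhiAbs : |Phi2 a k₁ k₂| = P * (5 * (x ^ 2 + x * y + y ^ 2) - 3 * a) := by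
    rw [hPhi, abs_mul, abs_neg, abs_of_nonneg (by nlinarith : (0:ℝ) ≤ 5 * (x ^ 2 + x * y + y ^ 2) - 3 * a)]
  -- bounds on the symbols
  have hq2abs : |q2 k₁ k₂| = P := by
    simp only [q2, hPdef, ← hx, ← hy]
    rw [show -(x) * y * (x + y) = -(x * y * (x + y)) by ring, abs_neg]
  have hq1abs : |q1 k₁ k₂| ≤ 6 * M * P := by
    have h1 : |q1 k₁ k₂| = |x + y| * (x ^ 2 + y ^ 2 + (x + y) ^ 2) := by
      simp only [q1, ← hx, ← hy]
      rw [show -(x + y) * (x ^ 2 + y ^ 2 + (x + y) ^ 2) = -((x + y) * (x ^ 2 + y ^ 2 + (x + y) ^ 2)) by ring,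
        abs_neg, abs_mul, abs_of_nonneg (show (0:ℝ) ≤ x ^ 2 + y ^ 2 + (x + y) ^ 2 by positivity)]
    rw [h1]
    have hx2 : x ^ 2 ≤ M ^ 2 := by
      rw [← sq_abs x]; exact pow_le_pow_left₀ (abs_nonneg x) hxM 2
    have hy2 : y ^ 2 ≤ M ^ 2 := by
      rw [← sq_abs y]; exact pow_le_pow_left₀ (abs_nonneg y) hyM 2
    have hxyab : |x + y| ≤ 2 * M := by linarith [abs_add_le x y]
    have hxy2' : (x + y) ^ 2 ≤ 4 * M ^ 2 := by
      rw [← sq_abs (x + y)]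
      calc |x + y| ^ 2 ≤ (2 * M) ^ 2 := pow_le_pow_left₀ (abs_nonneg _) hxyab 2
        _ = 4 * M ^ 2 := by ring
    have hs : x ^ 2 + y ^ 2 + (x + y) ^ 2 ≤ 6 * M ^ 2 := by linarith
    have hP' : P = |x| * |y| * |x + y| := by rw [hPdef, abs_mul, abs_mul]
    rw [hP']
    calc |x + y| * (x ^ 2 + y ^ 2 + (x + y) ^ 2)
        ≤ |x + y| * (6 * M ^ 2) := mul_le_mul_of_nonneg_left hs (abs_nonneg _)
      _ = 6 * M * (M * |x + y|) := by ring
      _ ≤ 6 * M * (|x| * |y| * |x + y|) := by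
          have h2 := mul_le_mul_of_nonneg_right hxyM (abs_nonneg (x + y))
          exact mul_le_mul_of_nonneg_left h2 (by linarith : (0:ℝ) ≤ 6 * M)
  -- bound the quadratic symbol
  have hQ : |β / 4 * q1 k₁ k₂ + (α - β / 2) * q2 k₁ k₂| ≤ 2 * M * (|α| + |β|) * P := by
    calc |β / 4 * q1 k₁ k₂ + (α - β / 2) * q2 k₁ k₂|
        ≤ |β / 4 * q1 k₁ k₂| + |(α - β / 2) * q2 k₁ k₂| := abs_add_le _ _
      _ = |β| / 4 * |q1 k₁ k₂| + |α - β / 2| * |q2 k₁ k₂| := by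
          rw [abs_mul, abs_mul, abs_div]; norm_num
      _ ≤ |β| / 4 * (6 * M * P) + (|α| + |β| / 2) * P := by
          have h1 : |β| / 4 * |q1 k₁ k₂| ≤ |β| / 4 * (6 * M * P) :=
            mul_le_mul_of_nonneg_left hq1abs (by positivity)
          have h2 : |α - β / 2| * |q2 k₁ k₂| ≤ (|α| + |β| / 2) * P := by
            rw [hq2abs]
            have h3 : |α - β / 2| ≤ |α| + |β| / 2 := by
              calc |α - β / 2| ≤ |α| + |β / 2| := abs_sub α (β / 2)
                _ = |α| + |β| / 2 := by rw [abs_div]; norm_num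
            exact mul_le_mul_of_nonneg_right h3 hP0
          linarith
      _ = (3 / 2 * M * |β| + (|α| + |β| / 2)) * P := by ring
      _ ≤ (2 * M * (|α| + |β|)) * P := by
          refine mul_le_mul_of_nonneg_right ?_ hP0
          have h4 := mul_nonneg (by linarith : (0:ℝ) ≤ 2 * M - 1) (abs_nonneg α)
          have h5 := mul_nonneg (by linarith : (0:ℝ) ≤ M / 2 - 1 / 2) (abs_nonneg β)
          linarith [h4, h5]
      _ = 2 * M * (|α| + |β|) * P := by ring
  rw [one_mul, le_div_iff₀ hMpos]
  calc |β / 4 * q1 k₁ k₂ + (α - β / 2) * q2 k₁ k₂| * M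
      ≤ (2 * M * (|α| + |β|) * P) * M := by
        exact mul_le_mul_of_nonneg_right hQ hMpos.le
    _ = (|α| + |β|) * (P * (2 * M ^ 2)) := by ring
    _ ≤ (|α| + |β|) * (P * (5 * (x ^ 2 + x * y + y ^ 2) - 3 * a)) := by
        have h1 : P * (2 * M ^ 2) ≤ P * (5 * (x ^ 2 + x * y + y ^ 2) - 3 * a) :=
          mul_le_mul_of_nonneg_left hD hP0
        exact mul_le_mul_of_nonneg_left h1 (add_nonneg (abs_nonneg α) (abs_nonneg β))
    _ = (|α| + |β|) * |Phi2 a k₁ k₂| := by rw [hPhiAbs]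
end

section
/- Let m₁, m₂ : ℤ² → ℂ with m₂ symmetric, i.e. m₂(k₁,k₂) = m₂(k₂,k₁) for all k₁, k₂. Then for all integers k₁, k₂, k₃: [ G ]_sym(k₁,k₂,k₃) = 2·[ F·χ_{NR(1,1)} ]_sym(k₁,k₂,k₃) + 2·[ F·χ_{NR(1,2)} ]_sym(k₁,k₂,k₃) + [ F·χ_{NR(2,1)} ]_sym(k₁,k₂,k₃) + [ F·χ_{NR(2,2)} ]_sym(k₁,k₂,k₃), where F(k₁,k₂,k₃) = m₁(k₁, k₂+k₃)·m₂(k₂,k₃) and G(k₁,k₂,k₃) = m₁(k₁, k₂+k₃)·( χ_{H1}(k₁, k₂+k₃) + χ_{H1}(k₂+k₃, k₁) )·m₂(k₂,k₃). -/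
/-- Symmetrization of a 3-multiplier: `(1/6)·Σ_{σ ∈ S₃} F(k_{σ(1)}, k_{σ(2)}, k_{σ(3)})`. -/
noncomputable def sym3 (F : ℤ → ℤ → ℤ → ℂ) (k₁ k₂ k₃ : ℤ) : ℂ :=
  (1 / 6) * (F k₁ k₂ k₃ + F k₁ k₃ k₂ + F k₂ k₁ k₃ + F k₂ k₃ k₁ + F k₃ k₁ k₂ + F k₃ k₂ k₁)

/-- Indicator of `4|k₁| < |k₂|`. -/
noncomputable def chiH1 (k₁ k₂ : ℤ) : ℂ := if 4 * |k₁| < |k₂| then 1 else 0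

/-- Indicator of `|k₁|/4 ≤ |k₂| ≤ 4|k₁|`. -/
noncomputable def chiH2 (k₁ k₂ : ℤ) : ℂ := if |k₁| ≤ 4 * |k₂| ∧ |k₂| ≤ 4 * |k₁| then 1 else 0

/-- Indicator `χ_{NR(1,1)}`. -/
noncomputable def chiNR11 (k₁ k₂ k₃ : ℤ) : ℂ := chiH1 k₁ (k₂ + k₃) * chiH1 k₂ k₃

/-- Indicator `χ_{NR(1,2)}`. -/
noncomputable def chiNR12 (k₁ k₂ k₃ : ℤ) : ℂ := chiH1 (k₂ + k₃) k₁ * chiH1 k₂ k₃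

/-- Indicator `χ_{NR(2,1)}`. -/
noncomputable def chiNR21 (k₁ k₂ k₃ : ℤ) : ℂ := chiH1 k₁ (k₂ + k₃) * chiH2 k₂ k₃

/-- Indicator `χ_{NR(2,2)}`. -/
noncomputable def chiNR22 (k₁ k₂ k₃ : ℤ) : ℂ := chiH1 (k₂ + k₃) k₁ * chiH2 k₂ k₃


lemma chi_part (a b : ℤ) : chiH1 a b + chiH1 b a + chiH2 a b = 1 := by
  have ha := abs_nonneg a
  have hb := abs_nonneg b
  unfold chiH1 chiH2
  generalize |a| = x at *
  generalize |b| = y at *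
  split_ifs <;> try norm_num
  all_goals omega

lemma chiH2_symm (a b : ℤ) : chiH2 a b = chiH2 b a := by
  unfold chiH2; exact if_congr and_comm rfl rfl

/-- Decomposition of the symmetrized extended product of two bilinear multipliers
into the four nonresonant regions (the quadratic case of Lemma 2.6). -/
theorem sym3_decomposition (m₁ m₂ : ℤ → ℤ → ℂ)
    (hm₂ : ∀ k₁ k₂, m₂ k₁ k₂ = m₂ k₂ k₁) (k₁ k₂ k₃ : ℤ) :
    sym3 (fun a b c => m₁ a (b + c) * (chiH1 a (b + c) + chiH1 (b + c) a) * m₂ b c) k₁ k₂ k₃ =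
      2 * sym3 (fun a b c => m₁ a (b + c) * m₂ b c * chiNR11 a b c) k₁ k₂ k₃
      + 2 * sym3 (fun a b c => m₁ a (b + c) * m₂ b c * chiNR12 a b c) k₁ k₂ k₃
      + sym3 (fun a b c => m₁ a (b + c) * m₂ b c * chiNR21 a b c) k₁ k₂ k₃
      + sym3 (fun a b c => m₁ a (b + c) * m₂ b c * chiNR22 a b c) k₁ k₂ k₃ := by
  simp only [sym3, chiNR11, chiNR12, chiNR21, chiNR22]
  rw [show k₃ + k₂ = k₂ + k₃ from add_comm _ _, show k₃ + k₁ = k₁ + k₃ from add_comm _ _,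
      show k₂ + k₁ = k₁ + k₂ from add_comm _ _,
      hm₂ k₃ k₂, hm₂ k₃ k₁, hm₂ k₂ k₁, chiH2_symm k₃ k₂, chiH2_symm k₃ k₁, chiH2_symm k₂ k₁]
  linear_combination
    -(1/3) * m₁ k₁ (k₂ + k₃) * m₂ k₂ k₃ * (chiH1 k₁ (k₂ + k₃) + chiH1 (k₂ + k₃) k₁) * chi_part k₂ k₃
    + -(1/3) * m₁ k₂ (k₁ + k₃) * m₂ k₁ k₃ * (chiH1 k₂ (k₁ + k₃) + chiH1 (k₁ + k₃) k₂) * chi_part k₁ k₃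
    + -(1/3) * m₁ k₃ (k₁ + k₂) * m₂ k₁ k₂ * (chiH1 k₃ (k₁ + k₂) + chiH1 (k₁ + k₂) k₃) * chi_part k₁ k₂
end

section
/- For every real s ≥ 1, every integer N ≥ 1 and every index i ∈ {1,…,N} there exists a constant C > 0 such that for all functions v₁, …, v_N : ℤ → [0,∞): ( Σ_{k∈ℤ} ⟨k⟩^{2s} · ( Σ_{k₁+⋯+k_N = k} ⟨k⟩^{-1} · (max_{1≤j≤N} ⟨k_j⟩)^{-2} · Π_{l=1}^N v_l(k_l) )² )^{1/2} ≤ C · ( Σ_{k∈ℤ} ⟨k⟩^{2(s−3)} v_i(k)² )^{1/2} · Π_{l≠i} ( Σ_{k∈ℤ} ⟨k⟩^{2s} v_l(k)² )^{1/2}, where the inner sum ranges over all N-tuples (k₁,…,k_N) ∈ ℤ^N with k₁+⋯+k_N = k and all sums are interpreted in [0,∞]. -/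
open scoped ENNReal NNReal BigOperators

/-- The Japanese bracket `⟨k⟩ = (1+k²)^{1/2}`, as an extended nonnegative real. -/
noncomputable def J (k : ℤ) : ℝ≥0∞ := ENNReal.ofReal (Real.sqrt (1 + (k : ℝ) ^ 2))

/-!
For `p` in the fibre `∑ l, p l = k` let `M = max_l ⟨p l⟩`. Subadditivity of `⟨·⟩` gives
`⟨k⟩ ≤ N M`, hence `⟨k⟩^s ⟨k⟩⁻¹ M⁻² ≤ N^(s-1) M^(s-3)`, and since every `⟨p l⟩ ≥ 1`,
`M^(s-3) ≤ ⟨p i⟩^(s-3) ∏_{l≠i} ⟨p l⟩^(s-1)`. Writing `⟨p l⟩^(s-1) = ⟨p l⟩⁻¹ ⟨p l⟩^s`,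
Cauchy–Schwarz on each fibre splits off `∑ ∏_{l≠i} ⟨p l⟩⁻²`, which is at most
`(∑_m ⟨m⟩⁻²)^(N-1) < ∞` because a point of the fibre is determined by its coordinates off `i`;
what remains, summed over `k`, is the product of the weighted `ℓ²` norms of the `v l`.
-/

open Finset

theorem ENNReal.tsum_pi_prod_eq_prod_tsum {ι α : Type*} [Fintype ι] (f : ι → α → ℝ≥0∞) :
    ∑' p : ι → α, ∏ l, f l (p l) = ∏ l, ∑' a, f l a := by
  revert f
  refine Fintype.induction_empty_option
    (P := fun ι _ => ∀ f : ι → α → ℝ≥0∞, ∑' p : ι → α, ∏ l, f l (p l) = ∏ l, ∑' a, f l a)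
    (fun ι κ _ e ih f => ?_) (fun f => by simp) (fun ι _ ih f => ?_) ι
  · let _ : Fintype ι := Fintype.ofEquiv κ e.symm
    calc ∑' p : κ → α, ∏ l, f l (p l)
        = ∑' q : ι → α, ∏ m, f (e m) (q m) := by
          rw [← (e.arrowCongr (Equiv.refl α)).tsum_eq]
          exact tsum_congr fun q => (Fintype.prod_equiv e _ _ fun m => by simp).symm
      _ = ∏ l, ∑' a, f l a := by
          rw [ih]; exact Fintype.prod_equiv e _ _ fun _ => rfl
  · rw [← Equiv.piOptionEquivProd.symm.tsum_eq, ENNReal.tsum_prod']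
    simp [Fintype.prod_option, ENNReal.tsum_mul_left, ENNReal.tsum_mul_right, ih]

theorem ENNReal.tsum_mul_sq_le_sq_mul_sq {α : Type*} (f g : α → ℝ≥0∞) :
    (∑' a, f a * g a) ^ 2 ≤ (∑' a, f a ^ 2) * ∑' a, g a ^ 2 := by
  let _ : MeasurableSpace α := ⊤
  have holder := ENNReal.lintegral_mul_le_Lp_mul_Lq MeasureTheory.Measure.count
    Real.HolderConjugate.two_two (measurable_from_top (f := f)).aemeasurable
    (measurable_from_top (f := g)).aemeasurable
  simp only [MeasureTheory.lintegral_count, Pi.mul_apply, ENNReal.rpow_two] at holder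
  calc (∑' a, f a * g a) ^ 2
      ≤ ((∑' a, f a ^ 2) ^ (1 / 2 : ℝ) * (∑' a, g a ^ 2) ^ (1 / 2 : ℝ)) ^ 2 :=
        pow_le_pow_left' holder 2
    _ = _ := by
      rw [mul_pow, ← ENNReal.rpow_natCast, ← ENNReal.rpow_natCast, ← ENNReal.rpow_mul,
        ← ENNReal.rpow_mul]
      norm_num

section FiberSums

variable {ι G : Type*} [Fintype ι] [DecidableEq ι] [AddCommGroup G] [DecidableEq G]

theorem tsum_ite_sum_eq_le_tsum_restrict (i : ι) (k : G) (F : ({l // l ≠ i} → G) → ℝ≥0∞) :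
    ∑' p : ι → G, (if ∑ l, p l = k then F (fun l => p l) else 0) ≤ ∑' q, F q := by
  have hinj : Function.Injective
      fun p : {p : ι → G | ∑ l, p l = k} => fun l : {l // l ≠ i} => p.1 l := by
    rintro ⟨p, hp : ∑ l, p l = k⟩ ⟨p', hp' : ∑ l, p' l = k⟩ h
    have hoff : ∀ l, l ≠ i → p l = p' l := fun l hl => congrFun h ⟨l, hl⟩
    have hsum : ∑ l ∈ univ.erase i, p l = ∑ l ∈ univ.erase i, p' l :=
      sum_congr rfl fun l hl => hoff l (ne_of_mem_erase hl)
    have hi : p i = p' i := by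
      rw [← add_sum_erase _ _ (mem_univ i), hsum] at hp
      rw [← add_sum_erase _ _ (mem_univ i)] at hp'
      exact add_right_cancel (hp.trans hp'.symm)
    exact Subtype.ext (funext fun l => if hl : l = i then hl ▸ hi else hoff l hl)
  calc ∑' p : ι → G, (if ∑ l, p l = k then F (fun l => p l) else 0)
      = ∑' p, {p : ι → G | ∑ l, p l = k}.indicator (fun p => F fun l => p l) p :=
        tsum_congr fun p => by simp [Set.indicator_apply]
    _ = ∑' p : {p : ι → G | ∑ l, p l = k}, F (fun l => p.1 l) := (_root_.tsum_subtype _ _).symm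
    _ ≤ ∑' q, F q := ENNReal.tsum_comp_le_tsum_of_injective hinj F

theorem tsum_ite_sum_eq_prod_erase_le (i : ι) (k : G) (w : ι → G → ℝ≥0∞) :
    ∑' p : ι → G, (if ∑ l, p l = k then ∏ l ∈ univ.erase i, w l (p l) else 0)
      ≤ ∏ l ∈ univ.erase i, ∑' a, w l a := by
  have hsub : ∀ g : ι → ℝ≥0∞, ∏ l ∈ univ.erase i, g l = ∏ l : {l // l ≠ i}, g l :=
    fun g => prod_subtype _ (fun l => by simp) g
  simp only [hsub]
  rw [← ENNReal.tsum_pi_prod_eq_prod_tsum]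
  exact tsum_ite_sum_eq_le_tsum_restrict i k fun q => ∏ l : {l // l ≠ i}, w l (q l)

theorem tsum_sq_tsum_ite_sum_eq_le (i : ι) (w f : ι → G → ℝ≥0∞) :
    ∑' k, (∑' p : ι → G,
        if ∑ l, p l = k then (∏ l ∈ univ.erase i, w l (p l)) * ∏ l, f l (p l) else 0) ^ 2
      ≤ (∏ l ∈ univ.erase i, ∑' a, w l a ^ 2) * ∏ l, ∑' a, f l a ^ 2 := by
  have hfiber : ∀ k, (∑' p : ι → G,
      if ∑ l, p l = k then (∏ l ∈ univ.erase i, w l (p l)) * ∏ l, f l (p l) else 0) ^ 2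
      ≤ (∏ l ∈ univ.erase i, ∑' a, w l a ^ 2) *
        ∑' p : ι → G, if ∑ l, p l = k then ∏ l, f l (p l) ^ 2 else 0 := by
    intro k
    calc _ = (∑' p : ι → G, (if ∑ l, p l = k then ∏ l ∈ univ.erase i, w l (p l) else 0) *
            if ∑ l, p l = k then ∏ l, f l (p l) else 0) ^ 2 := by
          simp only [ite_zero_mul_ite_zero, and_self]
      _ ≤ _ := ENNReal.tsum_mul_sq_le_sq_mul_sq _ _
      _ ≤ _ := by
          simp only [ite_pow, ← prod_pow, ne_eq, OfNat.ofNat_ne_zero, not_false_eq_true, zero_pow]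
          gcongr
          exact tsum_ite_sum_eq_prod_erase_le i k fun l a => w l a ^ 2
  calc _ ≤ _ := ENNReal.tsum_le_tsum hfiber
    _ = (∏ l ∈ univ.erase i, ∑' a, w l a ^ 2) * ∑' p : ι → G, ∏ l, f l (p l) ^ 2 := by
      rw [ENNReal.tsum_mul_left, ENNReal.tsum_comm]
      simp only [eq_comm (a := ∑ l, _), tsum_ite_eq]
    _ = _ := by rw [ENNReal.tsum_pi_prod_eq_prod_tsum fun l a => f l a ^ 2]

end FiberSums

theorem sup_rpow_le_rpow_mul_prod_erase_rpow {ι : Type*} [Fintype ι] [DecidableEq ι]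
    {x : ι → ℝ≥0∞} (hx : ∀ l, 1 ≤ x l) (i : ι) {a b : ℝ} (hab : a ≤ b) (hb : 0 ≤ b) :
    univ.sup x ^ a ≤ x i ^ a * ∏ l ∈ univ.erase i, x l ^ b := by
  have hxb : ∀ l, 1 ≤ x l ^ b := fun l => by
    simpa using ENNReal.rpow_le_rpow_of_exponent_le (hx l) hb
  have hprod : 1 ≤ ∏ l ∈ univ.erase i, x l ^ b := one_le_prod' fun l _ => hxb l
  obtain ⟨j, -, hj⟩ := exists_mem_eq_sup univ ⟨i, mem_univ i⟩ x
  rcases le_or_gt a 0 with ha | ha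
  · have hi : univ.sup x ^ a ≤ x i ^ a := by
      have h := ENNReal.rpow_le_rpow (le_sup (f := x) (mem_univ i)) (neg_nonneg.2 ha)
      rwa [ENNReal.rpow_neg, ENNReal.rpow_neg, ENNReal.inv_le_inv] at h
    exact hi.trans (le_mul_of_one_le_right' hprod)
  rw [hj]
  by_cases hji : j = i
  · rw [hji]
    exact le_mul_of_one_le_right' hprod
  calc x j ^ a ≤ x j ^ b := ENNReal.rpow_le_rpow_of_exponent_le (hx j) hab
    _ ≤ ∏ l ∈ univ.erase i, x l ^ b :=
        single_le_prod' (fun l _ => hxb l) (mem_erase.2 ⟨hji, mem_univ j⟩)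
    _ ≤ _ := le_mul_of_one_le_left' (ENNReal.one_le_rpow (hx i) ha)

theorem rpow_mul_prod_erase_rpow_sub_one {ι : Type*} [Fintype ι] [DecidableEq ι]
    {x : ι → ℝ≥0∞} (hx₀ : ∀ l, x l ≠ 0) (hx : ∀ l, x l ≠ ⊤) (i : ι) (a b : ℝ) :
    x i ^ a * ∏ l ∈ univ.erase i, x l ^ (b - 1)
      = (∏ l ∈ univ.erase i, x l ^ (-1 : ℝ)) * ∏ l, x l ^ (if l = i then a else b) := by
  rw [← mul_prod_erase univ _ (mem_univ i), if_pos rfl, mul_left_comm, ← prod_mul_distrib]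
  congr 1
  refine prod_congr rfl fun l hl => ?_
  rw [if_neg (ne_of_mem_erase hl), ← ENNReal.rpow_add _ _ (hx₀ l) (hx l), neg_add_eq_sub]

theorem summable_inv_one_add_sq_int : Summable fun m : ℤ => (1 + (m : ℝ) ^ 2)⁻¹ := by
  refine Summable.of_norm_bounded_eventually (Real.summable_one_div_int_pow.2 one_lt_two) ?_
  filter_upwards [Filter.eventually_cofinite_ne 0] with m hm
  rw [Real.norm_of_nonneg (by positivity), one_div]
  exact inv_anti₀ (by positivity) (by linarith)

theorem one_le_J (k : ℤ) : 1 ≤ J k :=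
  ENNReal.one_le_ofReal.2 (Real.one_le_sqrt.2 (by nlinarith))

theorem J_ne_zero (k : ℤ) : J k ≠ 0 := (zero_lt_one.trans_le (one_le_J k)).ne'

theorem J_ne_top (k : ℤ) : J k ≠ ⊤ := ENNReal.ofReal_ne_top

theorem J_add_le (a b : ℤ) : J (a + b) ≤ J a + J b := by
  rw [J, J, J, ← ENNReal.ofReal_add (Real.sqrt_nonneg _) (Real.sqrt_nonneg _)]
  refine ENNReal.ofReal_le_ofReal (Real.sqrt_le_iff.2 ⟨by positivity, ?_⟩)
  have hmul : |(a : ℝ) * b| ≤ √(1 + (a : ℝ) ^ 2) * √(1 + (b : ℝ) ^ 2) := by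
    rw [← Real.sqrt_mul (by positivity), ← Real.sqrt_sq_eq_abs]
    exact Real.sqrt_le_sqrt (by nlinarith)
  push_cast
  nlinarith [Real.sq_sqrt (show 0 ≤ 1 + (a : ℝ) ^ 2 by positivity),
    Real.sq_sqrt (show 0 ≤ 1 + (b : ℝ) ^ 2 by positivity), le_abs_self ((a : ℝ) * b)]

theorem J_sum_le_card_mul_sup {ι : Type*} [Fintype ι] [Nonempty ι] (p : ι → ℤ) :
    J (∑ l, p l) ≤ Fintype.card ι * univ.sup fun l => J (p l) :=
  calc J (∑ l, p l) ≤ ∑ l, J (p l) := le_sum_nonempty_of_subadditive J J_add_le univ_nonempty p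
    _ ≤ #univ • univ.sup fun l => J (p l) :=
        sum_le_card_nsmul _ _ _ fun l _ => le_sup (f := fun l => J (p l)) (mem_univ l)
    _ = _ := by rw [nsmul_eq_mul, card_univ]

theorem tsum_J_rpow_neg_one_sq_ne_top : ∑' m : ℤ, (J m ^ (-1 : ℝ)) ^ 2 ≠ ⊤ := by
  have h : ∀ m : ℤ, (J m ^ (-1 : ℝ)) ^ 2 = ENNReal.ofReal (1 + (m : ℝ) ^ 2)⁻¹ := fun m => by
    rw [ENNReal.rpow_neg_one, J, ← ENNReal.ofReal_inv_of_pos (by positivity),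
      ← ENNReal.ofReal_pow (by positivity), inv_pow, Real.sq_sqrt (by positivity)]
  rw [tsum_congr h, ← ENNReal.ofReal_tsum_of_nonneg (fun m => by positivity)
    summable_inv_one_add_sq_int]
  exact ENNReal.ofReal_ne_top

theorem J_sum_rpow_mul_sup_rpow_le {ι : Type*} [Fintype ι] [Nonempty ι] {s : ℝ} (hs : 1 ≤ s)
    (p : ι → ℤ) :
    J (∑ l, p l) ^ s * J (∑ l, p l) ^ (-1 : ℝ) * (univ.sup fun l => J (p l)) ^ (-2 : ℝ)
      ≤ (Fintype.card ι : ℝ≥0∞) ^ (s - 1) * (univ.sup fun l => J (p l)) ^ (s - 3) := by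
  obtain ⟨j, -, hj⟩ := exists_mem_eq_sup univ univ_nonempty fun l => J (p l)
  set M := univ.sup fun l => J (p l)
  have hM₀ : M ≠ 0 := hj ▸ J_ne_zero (p j)
  have hM : M ≠ ⊤ := hj ▸ J_ne_top (p j)
  rw [← ENNReal.rpow_add _ _ (J_ne_zero _) (J_ne_top _), ← sub_eq_add_neg]
  calc J (∑ l, p l) ^ (s - 1) * M ^ (-2 : ℝ)
      ≤ (Fintype.card ι * M) ^ (s - 1) * M ^ (-2 : ℝ) := by
        gcongr
        exact J_sum_le_card_mul_sup p
    _ = _ := by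
        rw [ENNReal.mul_rpow_of_nonneg _ _ (by linarith), mul_assoc,
          ← ENNReal.rpow_add _ _ hM₀ hM]
        ring_nf

theorem J_sum_rpow_mul_sup_rpow_le_prod {ι : Type*} [Fintype ι] [DecidableEq ι] {s : ℝ}
    (hs : 1 ≤ s) (i : ι) (p : ι → ℤ) :
    J (∑ l, p l) ^ s * J (∑ l, p l) ^ (-1 : ℝ) * (univ.sup fun l => J (p l)) ^ (-2 : ℝ)
      ≤ (Fintype.card ι : ℝ≥0∞) ^ (s - 1) * ((∏ l ∈ univ.erase i, J (p l) ^ (-1 : ℝ)) *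
          ∏ l, J (p l) ^ (if l = i then s - 3 else s)) := by
  have : Nonempty ι := ⟨i⟩
  rw [← rpow_mul_prod_erase_rpow_sub_one (fun l => J_ne_zero (p l)) (fun l => J_ne_top (p l))]
  refine (J_sum_rpow_mul_sup_rpow_le hs p).trans ?_
  gcongr
  exact sup_rpow_le_rpow_mul_prod_erase_rpow (fun l => one_le_J (p l)) i (by linarith)
    (by linarith)

theorem J_rpow_mul_tsum_ite_sum_eq_le {ι : Type*} [Fintype ι] [DecidableEq ι] {s : ℝ}
    (hs : 1 ≤ s) (i : ι) (u : ι → ℤ → ℝ≥0∞) (k : ℤ) :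
    J k ^ s * ∑' p : ι → ℤ, (if ∑ l, p l = k then
        J k ^ (-1 : ℝ) * (univ.sup fun l => J (p l)) ^ (-2 : ℝ) * ∏ l, u l (p l) else 0)
      ≤ (Fintype.card ι : ℝ≥0∞) ^ (s - 1) * ∑' p : ι → ℤ, if ∑ l, p l = k then
        (∏ l ∈ univ.erase i, J (p l) ^ (-1 : ℝ)) *
          ∏ l, J (p l) ^ (if l = i then s - 3 else s) * u l (p l) else 0 := by
  rw [← ENNReal.tsum_mul_left, ← ENNReal.tsum_mul_left]
  refine ENNReal.tsum_le_tsum fun p => ?_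
  split_ifs with hp
  · subst hp
    calc _ = J (∑ l, p l) ^ s * J (∑ l, p l) ^ (-1 : ℝ) *
          (univ.sup fun l => J (p l)) ^ (-2 : ℝ) * ∏ l, u l (p l) := by ring
      _ ≤ _ := mul_le_mul_left (J_sum_rpow_mul_sup_rpow_le_prod hs i p) _
      _ = _ := by rw [prod_mul_distrib]; ring
  · simp

theorem tsum_J_rpow_mul_sq_le {ι : Type*} [Fintype ι] [DecidableEq ι] {s : ℝ} (hs : 1 ≤ s)
    (i : ι) (u : ι → ℤ → ℝ≥0∞) :
    ∑' k : ℤ, J k ^ (2 * s) * (∑' p : ι → ℤ, if ∑ l, p l = k then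
        J k ^ (-1 : ℝ) * (univ.sup fun l => J (p l)) ^ (-2 : ℝ) * ∏ l, u l (p l) else 0) ^ 2
      ≤ ((Fintype.card ι : ℝ≥0∞) ^ (s - 1)) ^ 2 *
          (∏ _l ∈ univ.erase i, ∑' m : ℤ, (J m ^ (-1 : ℝ)) ^ 2) *
          ∏ l, ∑' m, J m ^ (2 * if l = i then s - 3 else s) * u l m ^ 2 := by
  set f : ι → ℤ → ℝ≥0∞ := fun l m => J m ^ (if l = i then s - 3 else s) * u l m
  have hf : ∀ l, ∑' m, J m ^ (2 * if l = i then s - 3 else s) * u l m ^ 2 = ∑' m, f l m ^ 2 :=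
    fun l => tsum_congr fun m => by rw [mul_pow, mul_comm 2, ENNReal.rpow_mul, ENNReal.rpow_two]
  simp only [hf]
  calc _ ≤ ∑' k, ((Fintype.card ι : ℝ≥0∞) ^ (s - 1)) ^ 2 * (∑' p : ι → ℤ, if ∑ l, p l = k then
          (∏ l ∈ univ.erase i, J (p l) ^ (-1 : ℝ)) * ∏ l, f l (p l) else 0) ^ 2 := by
        refine ENNReal.tsum_le_tsum fun k => ?_
        rw [mul_comm 2 s, ENNReal.rpow_mul, ENNReal.rpow_two, ← mul_pow, ← mul_pow]
        exact pow_le_pow_left' (J_rpow_mul_tsum_ite_sum_eq_le hs i u k) 2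
    _ ≤ _ := by
        rw [ENNReal.tsum_mul_left, mul_assoc]
        gcongr
        exact tsum_sq_tsum_ite_sum_eq_le i (fun _ m => J m ^ (-1 : ℝ)) f

theorem multilinear_gain_estimate_general (s : ℝ) (hs : 1 ≤ s) (N : ℕ) (i : Fin N) :
    ∃ C : ℝ, 0 < C ∧ ∀ v : Fin N → ℤ → ℝ≥0,
      (∑' k : ℤ, J k ^ (2 * s) *
          (∑' p : Fin N → ℤ, if (∑ j, p j) = k then
              J k ^ (-1 : ℝ) * (Finset.univ.sup fun j => J (p j)) ^ (-2 : ℝ) *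
                ∏ l, (v l (p l) : ℝ≥0∞)
            else 0) ^ (2 : ℕ)) ^ ((1 : ℝ) / 2)
      ≤ ENNReal.ofReal C *
          ((∑' k : ℤ, J k ^ (2 * (s - 3)) * (v i k : ℝ≥0∞) ^ (2 : ℕ)) ^ ((1 : ℝ) / 2) *
            ∏ l ∈ Finset.univ.erase i,
              (∑' k : ℤ, J k ^ (2 * s) * (v l k : ℝ≥0∞) ^ (2 : ℕ)) ^ ((1 : ℝ) / 2)) := by
  set A : ℝ≥0∞ := ((Fintype.card (Fin N) : ℝ≥0∞) ^ (s - 1)) ^ 2 *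
    ∏ _l ∈ univ.erase i, ∑' m : ℤ, (J m ^ (-1 : ℝ)) ^ 2
  have hA : A ^ ((1 : ℝ) / 2) ≠ ⊤ := by
    refine ENNReal.rpow_ne_top_of_nonneg (by norm_num) (ENNReal.mul_ne_top ?_ ?_)
    · exact ENNReal.pow_ne_top (ENNReal.rpow_ne_top_of_nonneg (by linarith) (by simp))
    · exact ENNReal.prod_ne_top fun _ _ => tsum_J_rpow_neg_one_sq_ne_top
  refine ⟨(A ^ ((1 : ℝ) / 2)).toReal + 1, by positivity, fun v => ?_⟩
  calc _ ≤ (A * ∏ l, ∑' m, J m ^ (2 * if l = i then s - 3 else s) * (v l m : ℝ≥0∞) ^ 2) ^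
          ((1 : ℝ) / 2) :=
        ENNReal.rpow_le_rpow (tsum_J_rpow_mul_sq_le hs i fun l m => v l m) (by norm_num)
    _ = A ^ ((1 : ℝ) / 2) *
          ((∑' k : ℤ, J k ^ (2 * (s - 3)) * (v i k : ℝ≥0∞) ^ 2) ^ ((1 : ℝ) / 2) *
            ∏ l ∈ univ.erase i,
              (∑' k : ℤ, J k ^ (2 * s) * (v l k : ℝ≥0∞) ^ 2) ^ ((1 : ℝ) / 2)) := by
        rw [ENNReal.mul_rpow_of_nonneg _ _ (by norm_num),
          ← ENNReal.prod_rpow_of_nonneg (by norm_num), ← mul_prod_erase univ _ (mem_univ i),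
          if_pos rfl]
        congr 2
        exact prod_congr rfl fun l hl => by rw [if_neg (ne_of_mem_erase hl)]
    _ ≤ _ := by
        gcongr
        exact (ENNReal.le_ofReal_iff_toReal_le hA (by positivity)).2 (by linarith)

/-- Multilinear smoothing estimate: the `⟨k⟩⁻¹⟨k_max⟩⁻²`-weighted convolution is bounded
in `l²_s` by `‖v_i‖_{H^{s-3}}` times the `H^s` norms of the other factors, for `s ≥ 1`. -/
theorem multilinear_gain_estimate (s : ℝ) (hs : 1 ≤ s) (N : ℕ) (hN : 1 ≤ N) (i : Fin N) :
    ∃ C : ℝ, 0 < C ∧ ∀ v : Fin N → ℤ → ℝ≥0,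
      (∑' k : ℤ, J k ^ (2 * s) *
          (∑' p : Fin N → ℤ, if (∑ j, p j) = k then
              J k ^ (-1 : ℝ) * (Finset.univ.sup fun j => J (p j)) ^ (-2 : ℝ) *
                ∏ l, (v l (p l) : ℝ≥0∞)
            else 0) ^ (2 : ℕ)) ^ ((1 : ℝ) / 2)
      ≤ ENNReal.ofReal C *
          ((∑' k : ℤ, J k ^ (2 * (s - 3)) * (v i k : ℝ≥0∞) ^ (2 : ℕ)) ^ ((1 : ℝ) / 2) *
            ∏ l ∈ Finset.univ.erase i,
              (∑' k : ℤ, J k ^ (2 * s) * (v l k : ℝ≥0∞) ^ (2 : ℕ)) ^ ((1 : ℝ) / 2)) :=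
  multilinear_gain_estimate_general s hs N i
end
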